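/- arXiv:2004.14490 — 6 statements merged into one kernel-verified Lean document; each statement's English description precedes it below -/
import Mathlib

section
/- If G is a connected finite simple graph of order n, then avec(G) ≤ (1/n)·⌊3n²/4 − n/2⌋, with equality if and only if G is a path on n vertices. -/
/-!
Passing to a spanning tree only increases eccentricities, so it suffices to bound trees. In a tree,
let `a` have maximal eccentricity `d` and let `p` be a geodesic from `a` to a vertex `b` at
distance `d`. Paths in a tree are unique, so for every vertex `x` the walk `a → x → b` passes
through each vertex `p k` of `p`; hence `p k` lies on a geodesic from `x` to `a` or to `b`, and its
eccentricity is at most `max k (d - k)`. The `d + 1` vertices of `p` thus contribute at most the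
eccentricity sum of a path on `d + 1` vertices and each of the other `n - 1 - d` vertices at most
`d`, which falls short of the path sum `⌊3n²/4 - n/2⌋` by at least `n - 1 - d`. Equality therefore
forces a vertex of eccentricity `n - 1`; a geodesic from it visits every vertex, and distances
along it identify the graph with the path.
-/

open SimpleGraph

/-- The eccentricity of a vertex `v`: the maximum distance from `v` to a vertex of `G`. -/
noncomputable def eccent {V : Type*} (G : SimpleGraph V) (v : V) : ℕ :=
  sSup (Set.range (G.dist v))

/-- The average eccentricity of a finite graph `G`. -/
noncomputable def avec {V : Type*} (G : SimpleGraph V) : ℝ :=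
  (∑ᶠ v, (eccent G v : ℝ)) / (Nat.card V)

/-- `G` contains no cycle of length `m` as a (not necessarily induced) subgraph. -/
def CycleFree {V : Type*} (G : SimpleGraph V) (m : ℕ) : Prop :=
  ∀ ⦃v : V⦄ (w : G.Walk v v), w.IsCycle → w.length ≠ m

open Finset

-- The `k`-th vertex of the path on `n` vertices has eccentricity `max k (n - 1 - k)`.
def pathEccSum (n : ℕ) : ℕ := ∑ k ∈ range n, max k (n - 1 - k)

lemma pathEccSum_add_le_succ (n : ℕ) : pathEccSum n + n ≤ pathEccSum (n + 1) := by
  rw [pathEccSum, pathEccSum, sum_range_succ]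
  gcongr
  · omega
  · simp

lemma pathEccSum_add_mul_le (m t : ℕ) : pathEccSum m + t * m ≤ pathEccSum (m + t) := by
  induction t with
  | zero => simp
  | succ t ih =>
    have := pathEccSum_add_le_succ (m + t)
    rw [add_one_mul, ← add_assoc m]
    omega

lemma pathEccSum_add_two (n : ℕ) : pathEccSum (n + 2) = pathEccSum n + 3 * n + 2 := by
  rw [pathEccSum, pathEccSum, sum_range_succ, sum_range_succ']
  have hmid : ∀ k ∈ range n, max (k + 1) (n + 2 - 1 - (k + 1)) = max k (n - 1 - k) + 1 := by
    intro k hk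
    simp only [mem_range] at hk
    omega
  rw [sum_congr rfl hmid, sum_add_distrib, sum_const, card_range, smul_eq_mul, mul_one]
  omega

lemma four_mul_pathEccSum_add_mod_two (n : ℕ) : 4 * pathEccSum n + n % 2 = 3 * n ^ 2 - 2 * n := by
  induction n using Nat.twoStepInduction with
  | zero => simp [pathEccSum]
  | one => simp [pathEccSum]
  | more n ih _ =>
    rw [pathEccSum_add_two]
    have : 3 * (n + 2) ^ 2 = 3 * n ^ 2 + 12 * n + 12 := by ring
    have : 2 * n ≤ 3 * n ^ 2 := by nlinarith
    omega

lemma floor_eq_pathEccSum (n : ℕ) : ⌊3 * (n : ℝ) ^ 2 / 4 - (n : ℝ) / 2⌋ = pathEccSum n := by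
  obtain ⟨r, hr, h⟩ : ∃ r ≤ 1, 4 * pathEccSum n + r + 2 * n = 3 * n ^ 2 := by
    have := four_mul_pathEccSum_add_mod_two n
    have : 2 * n ≤ 3 * n ^ 2 := by nlinarith
    exact ⟨n % 2, by omega, by omega⟩
  have hR : (4 * pathEccSum n + r + 2 * n : ℝ) = 3 * (n : ℝ) ^ 2 := by exact_mod_cast h
  have hr' : (r : ℝ) ≤ 1 := by exact_mod_cast hr
  rw [Int.floor_eq_iff, Int.cast_natCast]
  constructor <;> linarith [(Nat.cast_nonneg r : (0 : ℝ) ≤ r)]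

namespace SimpleGraph

variable {V : Type*} {G : SimpleGraph V}

namespace Walk

lemma dist_add_dist_of_mem_support {u v x : V} {p : G.Walk u v} (hp : p.length = G.dist u v)
    (hx : x ∈ p.support) : G.dist u x + G.dist x v = G.dist u v := by
  classical
  rw [← length_eq_dist_of_subwalk hp (p.isSubwalk_takeUntil hx),
    ← length_eq_dist_of_subwalk hp (p.isSubwalk_dropUntil hx), ← length_append, take_spec, hp]

lemma dist_getVert_getVert {u v : V} {p : G.Walk u v} (hp : p.length = G.dist u v) {i j : ℕ}
    (hij : i ≤ j) (hj : j ≤ p.length) : G.dist (p.getVert i) (p.getVert j) = j - i := by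
  have h := length_eq_dist_of_subwalk hp
    (((p.drop i).isSubwalk_take (j - i)).trans (p.isSubwalk_drop i))
  rw [take_length, drop_length, drop_getVert, Nat.add_sub_cancel' hij] at h
  omega

end Walk

lemma dist_lt_card [Fintype V] (u v : V) : G.dist u v < Fintype.card V := by
  by_cases hr : G.Reachable u v
  · obtain ⟨p, hp, hpl⟩ := hr.exists_path_of_dist
    exact hpl ▸ hp.length_lt
  · rw [dist_eq_zero_of_not_reachable hr]
    exact Fintype.card_pos_iff.2 ⟨u⟩

lemma IsAcyclic.support_subset_of_isPath (hG : G.IsAcyclic) {a b : V} {p : G.Walk a b}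
    (hp : p.IsPath) (w : G.Walk a b) : p.support ⊆ w.support := by
  classical
  have : w.bypass = p :=
    congrArg Subtype.val ((hG.subsingleton_path a b).elim ⟨_, w.bypass_isPath⟩ ⟨p, hp⟩)
  exact this ▸ w.support_bypass_subset_support

lemma IsTree.dist_add_dist_eq_or (hG : G.IsTree) {a b y : V} {p : G.Walk a b} (hp : p.IsPath)
    (hy : y ∈ p.support) (x : V) :
    G.dist a y + G.dist y x = G.dist a x ∨ G.dist x y + G.dist y b = G.dist x b := by
  obtain ⟨P, -, hP⟩ := hG.connected.exists_path_of_dist a x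
  obtain ⟨Q, -, hQ⟩ := hG.connected.exists_path_of_dist x b
  have hy' := hG.isAcyclic.support_subset_of_isPath hp (P.append Q) hy
  rcases (Walk.mem_support_append_iff P Q).1 hy' with hyP | hyQ
  · exact .inl (Walk.dist_add_dist_of_mem_support hP hyP)
  · exact .inr (Walk.dist_add_dist_of_mem_support hQ hyQ)

lemma pathGraph_val_le_add_length {n : ℕ} {i j : Fin n} (w : (pathGraph n).Walk i j) :
    (i : ℕ) ≤ j + w.length ∧ (j : ℕ) ≤ i + w.length := by
  induction w with
  | nil => simp
  | cons h _ ih =>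
    rw [pathGraph_adj] at h
    rw [Walk.length_cons]
    omega

lemma nonempty_iso_pathGraph_of_dist_eq [Fintype V] {u v : V} (hr : G.Reachable u v)
    (huv : G.dist u v = Fintype.card V - 1) : Nonempty (G ≃g pathGraph (Fintype.card V)) := by
  obtain ⟨p, hp, hpl⟩ := hr.exists_path_of_dist
  have hn : Fintype.card V = p.length + 1 := by have := hp.length_lt; omega
  let φ : Fin (Fintype.card V) → V := fun k => p.getVert k
  have hφ : φ.Injective := fun i j h =>
    Fin.ext (hp.getVert_injOn (by simp; omega) (by simp; omega) h)
  have hdist (i j : Fin (Fintype.card V)) (hij : i ≤ j) : G.dist (φ i) (φ j) = j - i :=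
    Walk.dist_getVert_getVert hpl hij (by omega)
  refine ⟨RelIso.symm ⟨Equiv.ofBijective φ ((Fintype.bijective_iff_injective_and_card φ).2
    ⟨hφ, by simp⟩), fun {i j} => ?_⟩⟩
  rw [Equiv.ofBijective_apply, Equiv.ofBijective_apply, ← dist_eq_one_iff_adj, pathGraph_adj]
  rcases le_total i j with h | h
  · rw [hdist i j h]; omega
  · rw [dist_comm, hdist j i h]; omega

end SimpleGraph

section Eccentricity

-- `_root_.eccent` is the `ℕ`-valued eccentricity defined above, not Mathlib's `SimpleGraph.eccent`.
variable {V : Type*}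

lemma dist_le_eccent [Finite V] (G : SimpleGraph V) (v x : V) : G.dist v x ≤ _root_.eccent G v :=
  le_csSup (Set.finite_range _).bddAbove (Set.mem_range_self x)

lemma eccent_le_of_forall_dist_le {G : SimpleGraph V} {m : ℕ} {v : V} (h : ∀ x, G.dist v x ≤ m) :
    _root_.eccent G v ≤ m :=
  csSup_le ⟨_, Set.mem_range_self v⟩ (Set.forall_mem_range.2 h)

lemma exists_dist_eq_eccent [Finite V] (G : SimpleGraph V) (v : V) :
    ∃ x, G.dist v x = _root_.eccent G v :=
  Nat.sSup_mem ⟨_, Set.mem_range_self v⟩ (Set.finite_range _).bddAbove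

lemma eccent_lt_card [Fintype V] (G : SimpleGraph V) (v : V) :
    _root_.eccent G v < Fintype.card V := by
  obtain ⟨x, hx⟩ := exists_dist_eq_eccent G v
  exact hx ▸ dist_lt_card v x

lemma eccent_anti [Finite V] {G T : SimpleGraph V} (hTG : T ≤ G) (hT : T.Preconnected) (v : V) :
    _root_.eccent G v ≤ _root_.eccent T v :=
  eccent_le_of_forall_dist_le fun x => ((hT v x).dist_anti hTG).trans (dist_le_eccent T v x)

lemma SimpleGraph.IsTree.eccent_getVert_le [Finite V] {G : SimpleGraph V} (hG : G.IsTree)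
    {a b : V} {p : G.Walk a b} (hp : p.length = G.dist a b) (ha : _root_.eccent G a ≤ p.length)
    (hb : _root_.eccent G b ≤ p.length) {k : ℕ} (hk : k ≤ p.length) :
    _root_.eccent G (p.getVert k) ≤ max k (p.length - k) := by
  refine eccent_le_of_forall_dist_le fun x => ?_
  have hak : G.dist a (p.getVert k) = k := by
    simpa using Walk.dist_getVert_getVert hp k.zero_le hk
  have hkb : G.dist (p.getVert k) b = p.length - k := by
    simpa using Walk.dist_getVert_getVert hp hk le_rfl
  have hax := (dist_le_eccent G a x).trans ha
  have hbx := (dist_le_eccent G b x).trans hb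
  rw [dist_comm] at hbx
  rcases hG.dist_add_dist_eq_or (p.isPath_of_length_eq_dist hp) (p.getVert_mem_support k) x
    with h | h
  · omega
  · rw [dist_comm] at h; omega

lemma SimpleGraph.IsTree.sum_eccent_add_le [Fintype V] {G : SimpleGraph V} (hG : G.IsTree) {a : V}
    (ha : ∀ v, _root_.eccent G v ≤ _root_.eccent G a) :
    ∑ v, _root_.eccent G v + (Fintype.card V - 1 - _root_.eccent G a) ≤
      pathEccSum (Fintype.card V) := by
  classical
  obtain ⟨b, hb⟩ := exists_dist_eq_eccent G a
  obtain ⟨p, hp, hpl⟩ := hG.connected.exists_path_of_dist a b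
  set d := p.length
  have hd : _root_.eccent G a = d := by omega
  have hdn : d < Fintype.card V := hp.length_lt
  have hinj : Set.InjOn p.getVert (range (d + 1)) :=
    hp.getVert_injOn.mono fun k hk => by simp at hk ⊢; omega
  set S := (range (d + 1)).image p.getVert
  have hS : ∑ v ∈ S, _root_.eccent G v ≤ pathEccSum (d + 1) := by
    rw [sum_image hinj, pathEccSum]
    refine sum_le_sum fun k hk => ?_
    simp only [mem_range] at hk
    exact (hG.eccent_getVert_le hpl hd.le ((ha b).trans hd.le) (by omega)).trans (by omega)
  have hSc : ∑ v ∈ Sᶜ, _root_.eccent G v ≤ #Sᶜ * d :=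
    sum_le_card_nsmul _ _ _ fun v _ => (ha v).trans hd.le
  have hcard : #Sᶜ = Fintype.card V - (d + 1) := by
    rw [card_compl, card_image_of_injOn hinj, card_range]
  have hpath := pathEccSum_add_mul_le (d + 1) (Fintype.card V - (d + 1))
  rw [Nat.add_sub_cancel' hdn, hcard.symm, mul_add_one] at hpath
  rw [← sum_add_sum_compl S, hd]
  omega

lemma SimpleGraph.Connected.exists_sum_eccent_add_le [Fintype V] {G : SimpleGraph V}
    (hG : G.Connected) :
    ∃ a, ∑ v, _root_.eccent G v + (Fintype.card V - 1 - _root_.eccent G a) ≤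
      pathEccSum (Fintype.card V) := by
  obtain ⟨T, hTG, hT⟩ := hG.exists_isTree_le
  have := hG.nonempty
  obtain ⟨a, ha⟩ := Finite.exists_max (_root_.eccent T)
  have hle := eccent_anti hTG hT.connected.preconnected
  have hsum : ∑ v, _root_.eccent G v + (_root_.eccent T a - _root_.eccent G a) ≤
      ∑ v, _root_.eccent T v :=
    calc _ ≤ ∑ v, _root_.eccent G v + ∑ v, (_root_.eccent T v - _root_.eccent G v) := by
          gcongr
          exact single_le_sum (fun v _ => (_root_.eccent T v - _root_.eccent G v).zero_le)
            (mem_univ a)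
      _ = ∑ v, _root_.eccent T v := by
          rw [← sum_add_distrib]
          exact sum_congr rfl fun v _ => Nat.add_sub_cancel' (hle v)
  have := hT.sum_eccent_add_le ha
  have := eccent_lt_card T a
  exact ⟨a, by omega⟩

lemma max_le_eccent_of_iso_pathGraph [Finite V] {G : SimpleGraph V} (hG : G.Connected) {n : ℕ}
    (φ : G ≃g pathGraph n) (v : V) : max (φ v : ℕ) (n - 1 - φ v) ≤ _root_.eccent G v := by
  have key (x : V) :
      (φ v : ℕ) ≤ φ x + _root_.eccent G v ∧ (φ x : ℕ) ≤ φ v + _root_.eccent G v := by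
    obtain ⟨w, hw⟩ := hG.exists_walk_length_eq_dist v x
    have : (φ v : ℕ) ≤ φ x + (w.map φ.toHom).length ∧ (φ x : ℕ) ≤ φ v + (w.map φ.toHom).length :=
      pathGraph_val_le_add_length _
    rw [Walk.length_map, hw] at this
    have := dist_le_eccent G v x
    omega
  have hn : 0 < n := (φ v).pos
  have h0 := key (φ.symm ⟨0, hn⟩)
  have h1 := key (φ.symm ⟨n - 1, by omega⟩)
  simp only [RelIso.apply_symm_apply] at h0 h1
  omega

lemma pathEccSum_le_sum_eccent_of_iso [Fintype V] {G : SimpleGraph V} (hG : G.Connected) {n : ℕ}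
    (φ : G ≃g pathGraph n) : pathEccSum n ≤ ∑ v, _root_.eccent G v :=
  calc pathEccSum n = ∑ i : Fin n, max (i : ℕ) (n - 1 - i) :=
        (Fin.sum_univ_eq_sum_range _ n).symm
    _ = ∑ v, max (φ v : ℕ) (n - 1 - φ v) := (Equiv.sum_comp φ.toEquiv _).symm
    _ ≤ _ := sum_le_sum fun v _ => max_le_eccent_of_iso_pathGraph hG φ v

lemma avec_eq_sum_div [Fintype V] (G : SimpleGraph V) :
    avec G = ((∑ v, _root_.eccent G v : ℕ) : ℝ) / Fintype.card V := by
  rw [avec, finsum_eq_sum_of_fintype, Nat.card_eq_fintype_card, Nat.cast_sum]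

end Eccentricity

theorem stmt_0 {V : Type*} [Fintype V] (G : SimpleGraph V) (hG : G.Connected)
    (n : ℕ) (hn : n = Fintype.card V) :
    avec G ≤ (⌊3 * (n : ℝ) ^ 2 / 4 - (n : ℝ) / 2⌋ : ℝ) / n ∧
      (avec G = (⌊3 * (n : ℝ) ^ 2 / 4 - (n : ℝ) / 2⌋ : ℝ) / n ↔
        Nonempty (G ≃g pathGraph n)) := by
  subst hn
  have hpos : (0 : ℝ) < Fintype.card V := by exact_mod_cast Fintype.card_pos_iff.2 hG.nonempty
  rw [avec_eq_sum_div, floor_eq_pathEccSum, Int.cast_natCast, div_le_div_iff_of_pos_right hpos,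
    div_left_inj' hpos.ne', Nat.cast_le, Nat.cast_inj]
  obtain ⟨a, ha⟩ := hG.exists_sum_eccent_add_le
  refine ⟨by omega, fun h => ?_, fun ⟨φ⟩ =>
    le_antisymm (by omega) (pathEccSum_le_sum_eccent_of_iso hG φ)⟩
  obtain ⟨x, hx⟩ := exists_dist_eq_eccent G a
  have := eccent_lt_card G a
  exact nonempty_iso_pathGraph_of_dist_eq (hG.preconnected a x) (by omega)
end

section
/- Let G be a finite simple (C₄,C₅)-free graph with minimum degree δ ≥ 3. If v and w are adjacent vertices of G, then |N_{≤2}(vw)| ≥ 2δ² − 5δ + 5 if δ is even, and |N_{≤2}(vw)| ≥ 2δ² − 5δ + 7 if δ is odd. -/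
/-!
Each vertex `x` of the first layer `N(v) ∪ N(w) \ {v, w}` has, by `C₄`-freeness, at most two
neighbours within distance one of the edge `vw`, hence at least `δ - 2` neighbours at distance two.
No vertex at distance two is adjacent to two vertices of the first layer (that would close a `C₄`
or a `C₅`), so `|N_{≤2}(vw)| ≥ 2 + (δ - 1) · |first layer|`, and the first layer has at least
`2δ - 3` vertices since `v` and `w` have at most one common neighbour. For odd `δ` and a common
neighbour, the extremal case has `δ - 2` private neighbours of `v`; they induce a matching, so by
parity one of them has no neighbour in `N(v)` and gains an extra vertex at distance two; likewise
on the side of `w`.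
-/

open SimpleGraph

open Finset

namespace CycleFree

variable {V : Type*} {G : SimpleGraph V}

lemma not_four_cycle (h4 : CycleFree G 4) {a b c d : V}
    (hab : G.Adj a b) (hbc : G.Adj b c) (hcd : G.Adj c d) (hda : G.Adj d a)
    (hac : a ≠ c) (hbd : b ≠ d) : False := by
  refine h4 (.cons hab (.cons hbc (.cons hcd (.cons hda .nil)))) ?_ (by simp)
  refine ⟨⟨?_, by simp⟩, ?_⟩
  · rw [Walk.isTrail_def]
    simp [Sym2.eq, Sym2.rel_iff', hab.ne, hbc.ne, hcd.ne, hda.ne, hac, hbd, hab.ne', hda.ne',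
      hac.symm]
  · simp [hbc.ne, hbd, hcd.ne, hac.symm, hda.ne, hab.ne']

lemma not_five_cycle (h5 : CycleFree G 5) {a b c d e : V}
    (hab : G.Adj a b) (hbc : G.Adj b c) (hcd : G.Adj c d) (hde : G.Adj d e) (hea : G.Adj e a)
    (hac : a ≠ c) (had : a ≠ d) (hbd : b ≠ d) (hbe : b ≠ e) (hce : c ≠ e) : False := by
  refine h5 (.cons hab (.cons hbc (.cons hcd (.cons hde (.cons hea .nil))))) ?_ (by simp)
  refine ⟨⟨?_, by simp⟩, ?_⟩
  · rw [Walk.isTrail_def]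
    simp [Sym2.eq, Sym2.rel_iff', hab.ne, hbc.ne, hcd.ne, hde.ne, hea.ne, hac, had, hbd, hbe, hce,
      hab.ne', hea.ne', hac.symm, had.symm]
  · simp [hbc.ne, hbd, hbe, hcd.ne, hce, hde.ne, hac.symm, had.symm, hab.ne', hea.ne]

lemma eq_of_adj_of_adj (h4 : CycleFree G 4) {v z x y : V} (hvz : v ≠ z)
    (hvx : G.Adj v x) (hvy : G.Adj v y) (hzx : G.Adj z x) (hzy : G.Adj z y) : x = y := by
  by_contra hxy
  exact h4.not_four_cycle hvx hzx.symm hzy hvy.symm hvz hxy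

lemma not_adj_of_adj_of_adj (h4 : CycleFree G 4) {v w x y : V} (hvw : G.Adj v w)
    (hvx : G.Adj v x) (hwy : G.Adj w y) (hxw : x ≠ w) (hyv : y ≠ v) : ¬ G.Adj x y := fun hxy ↦
  h4.not_four_cycle hvx hxy hwy.symm hvw.symm hyv.symm hxw

variable [Fintype V] [DecidableEq V] [DecidableRel G.Adj]

lemma card_neighborFinset_inter_le_one (h4 : CycleFree G 4) {v z : V} (hvz : v ≠ z) :
    #(G.neighborFinset v ∩ G.neighborFinset z) ≤ 1 :=
  card_le_one.mpr fun _ hx _ hy ↦ by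
    simp only [mem_inter, mem_neighborFinset] at hx hy
    exact h4.eq_of_adj_of_adj hvz hx.1 hy.1 hx.2 hy.2

end CycleFree

namespace SimpleGraph

variable {V : Type*} {G : SimpleGraph V}

lemma exists_forall_not_adj_of_odd_card {s : Finset V} (hs : Odd #s)
    (hmatch : ∀ x ∈ s, ∀ y ∈ s, ∀ z ∈ s, G.Adj x y → G.Adj x z → y = z) :
    ∃ x ∈ s, ∀ y ∈ s, ¬ G.Adj x y := by
  -- otherwise sending `x` to its unique neighbour in `s` is a fixed-point-free involution of `s`
  by_contra! hall
  choose! f hfs hadj using hall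
  let σ : s → s := fun x ↦ ⟨f x, hfs x x.2⟩
  have hσ : Function.Involutive σ := fun x ↦ Subtype.ext <|
    hmatch _ (hfs x x.2) _ (hfs _ (hfs x x.2)) _ x.2 (hadj _ (hfs x x.2)) (hadj x x.2).symm
  have hodd : ¬ 2 ∣ Fintype.card s := by
    rwa [Fintype.card_coe, ← even_iff_two_dvd, Nat.not_even_iff_odd]
  have : Fact (Nat.Prime 2) := ⟨Nat.prime_two⟩
  obtain ⟨x, hx⟩ := Equiv.Perm.exists_fixed_point_of_prime (n := 1) hodd
    (σ := hσ.toPerm) (Equiv.ext fun x ↦ by simp [sq, hσ x])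
  exact (hadj x x.2).ne (congrArg Subtype.val hx).symm

variable [Fintype V] [DecidableEq V] [DecidableRel G.Adj] {v w x : V}

variable (G)

def firstLayer (v w : V) : Finset V :=
  (G.neighborFinset v ∪ G.neighborFinset w) \ {v, w}

/-- For adjacent `v` and `w`, the set `N(v) ∪ N(w)` is `N_{≤1}(vw)`, so these are the neighbours
of `x` at distance two from the edge `vw`. -/
def outerNeighbors (v w x : V) : Finset V :=
  G.neighborFinset x \ (G.neighborFinset v ∪ G.neighborFinset w)

def privateNeighbors (v w : V) : Finset V :=
  G.neighborFinset v \ insert w (G.neighborFinset w)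

variable {G}

lemma outerNeighbors_comm (v w x : V) : G.outerNeighbors v w x = G.outerNeighbors w v x := by
  rw [outerNeighbors, outerNeighbors, union_comm]

lemma firstLayer_comm (v w : V) : G.firstLayer v w = G.firstLayer w v := by
  rw [firstLayer, firstLayer, union_comm, pair_comm]

lemma mem_firstLayer :
    x ∈ G.firstLayer v w ↔ (G.Adj v x ∧ x ≠ w) ∨ (G.Adj w x ∧ x ≠ v) := by
  simp only [firstLayer, mem_sdiff, mem_union, mem_neighborFinset, mem_insert, mem_singleton]
  constructor
  · rintro ⟨hx | hx, hne⟩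
    exacts [.inl ⟨hx, fun h ↦ hne (.inr h)⟩, .inr ⟨hx, fun h ↦ hne (.inl h)⟩]
  · rintro (⟨hx, hxw⟩ | ⟨hx, hxv⟩)
    exacts [⟨.inl hx, by rintro (rfl | rfl) <;> simp_all⟩,
      ⟨.inr hx, by rintro (rfl | rfl) <;> simp_all⟩]

lemma card_firstLayer_add (hvw : G.Adj v w) :
    #(G.firstLayer v w) + #(G.neighborFinset v ∩ G.neighborFinset w) + 2 =
      G.degree v + G.degree w := by
  have hsub : {v, w} ⊆ G.neighborFinset v ∪ G.neighborFinset w := by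
    simp [insert_subset_iff, hvw, hvw.symm]
  rw [firstLayer, card_sdiff_of_subset hsub, card_pair hvw.ne, ← card_neighborFinset_eq_degree,
    ← card_neighborFinset_eq_degree, ← card_union_add_card_inter]
  have := card_le_card hsub
  rw [card_pair hvw.ne] at this
  omega

lemma card_privateNeighbors_add (hvw : G.Adj v w) :
    #(G.privateNeighbors v w) + #(G.neighborFinset v ∩ G.neighborFinset w) + 1 = G.degree v := by
  have hinter : G.neighborFinset v ∩ insert w (G.neighborFinset w) =
      insert w (G.neighborFinset v ∩ G.neighborFinset w) := by
    rw [inter_insert_of_mem (by simpa using hvw)]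
  have := card_sdiff_add_card_inter (G.neighborFinset v) (insert w (G.neighborFinset w))
  rw [hinter, card_insert_of_notMem (by simp)] at this
  rw [privateNeighbors, ← card_neighborFinset_eq_degree]
  omega

lemma mem_outerNeighbors {z : V} :
    z ∈ G.outerNeighbors v w x ↔ G.Adj x z ∧ ¬ G.Adj v z ∧ ¬ G.Adj w z := by
  simp [outerNeighbors]

lemma privateNeighbors_subset_firstLayer :
    G.privateNeighbors v w ⊆ G.firstLayer v w := fun x hx ↦ by
  simp only [privateNeighbors, mem_sdiff, mem_insert, mem_neighborFinset, not_or] at hx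
  exact mem_firstLayer.mpr (.inl ⟨hx.1, hx.2.1⟩)

lemma inter_subset_firstLayer :
    G.neighborFinset v ∩ G.neighborFinset w ⊆ G.firstLayer v w := fun x hx ↦ by
  simp only [mem_inter, mem_neighborFinset] at hx
  exact mem_firstLayer.mpr (.inl ⟨hx.1, hx.2.ne'⟩)

lemma sum_firstLayer_eq (f : V → ℕ) :
    ∑ x ∈ G.firstLayer v w, f x =
      ∑ x ∈ G.privateNeighbors v w, f x + ∑ x ∈ G.privateNeighbors w v, f x +
        ∑ x ∈ G.neighborFinset v ∩ G.neighborFinset w, f x := by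
  have hsplit : G.firstLayer v w =
      G.privateNeighbors v w ∪ G.privateNeighbors w v ∪
        G.neighborFinset v ∩ G.neighborFinset w := by
    ext x
    rw [mem_firstLayer]
    simp only [privateNeighbors, mem_union, mem_sdiff, mem_inter, mem_insert, mem_neighborFinset]
    grind [Adj.ne]
  rw [hsplit, sum_union, sum_union] <;>
    simp only [privateNeighbors, Finset.disjoint_left, mem_union, mem_sdiff, mem_inter, mem_insert,
      mem_neighborFinset] <;>
    tauto

end SimpleGraph

namespace CycleFree

variable {V : Type*} [Fintype V] [DecidableEq V] {G : SimpleGraph V} [DecidableRel G.Adj]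
  {v w x : V}

lemma neighborFinset_inter_subset (h4 : CycleFree G 4) (hvw : G.Adj v w) (hvx : G.Adj v x)
    (hxw : x ≠ w) : G.neighborFinset x ∩ (G.neighborFinset v ∪ G.neighborFinset w) ⊆
      insert v (G.neighborFinset x ∩ G.neighborFinset v) := by
  intro z hz
  simp only [mem_inter, mem_union, mem_neighborFinset, mem_insert] at hz ⊢
  obtain ⟨hxz, hvz | hwz⟩ := hz
  · exact .inr ⟨hxz, hvz⟩
  · by_contra! hzv
    exact h4.not_adj_of_adj_of_adj hvw hvx hwz hxw hzv.1 hxz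

lemma degree_le_card_outerNeighbors_add (h4 : CycleFree G 4) (hvw : G.Adj v w) (hvx : G.Adj v x)
    (hxw : x ≠ w) :
    G.degree x ≤ #(G.outerNeighbors v w x) + 1 + #(G.neighborFinset x ∩ G.neighborFinset v) := by
  have hsplit := card_sdiff_add_card_inter (G.neighborFinset x)
    (G.neighborFinset v ∪ G.neighborFinset w)
  have hinter := (card_le_card (h4.neighborFinset_inter_subset hvw hvx hxw)).trans
    (card_insert_le _ _)
  rw [card_neighborFinset_eq_degree] at hsplit
  rw [outerNeighbors]
  omega

lemma minDegree_le_card_outerNeighbors_add_two (h4 : CycleFree G 4) (hvw : G.Adj v w)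
    (hx : x ∈ G.firstLayer v w) : G.minDegree ≤ #(G.outerNeighbors v w x) + 2 := by
  wlog hvx : G.Adj v x ∧ x ≠ w generalizing v w
  · have hwx := (mem_firstLayer.mp hx).resolve_left hvx
    rw [outerNeighbors_comm]
    exact this hvw.symm (by rwa [firstLayer_comm] at hx) hwx
  have hdeg := h4.degree_le_card_outerNeighbors_add hvw hvx.1 hvx.2
  have hcommon := h4.card_neighborFinset_inter_le_one hvx.1.ne'
  have := G.minDegree_le_degree x
  omega

lemma card_mul_le_sum_outerNeighbors (h4 : CycleFree G 4) (hvw : G.Adj v w) {s : Finset V}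
    (hs : s ⊆ G.firstLayer v w) :
    #s * (G.minDegree - 1) ≤ ∑ x ∈ s, (#(G.outerNeighbors v w x) + 1) := by
  rw [← smul_eq_mul]
  exact card_nsmul_le_sum s _ _ fun x hx ↦ by
    have := h4.minDegree_le_card_outerNeighbors_add_two hvw (hs hx)
    omega

lemma exists_minDegree_le_card_outerNeighbors_add_one (h4 : CycleFree G 4) (hvw : G.Adj v w)
    (hodd : Odd #(G.privateNeighbors v w)) :
    ∃ x ∈ G.privateNeighbors v w, G.minDegree ≤ #(G.outerNeighbors v w x) + 1 := by
  have hmem {x : V} : x ∈ G.privateNeighbors v w ↔ G.Adj v x ∧ x ≠ w ∧ ¬ G.Adj w x := by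
    simp [privateNeighbors]
  obtain ⟨x, hx, hisol⟩ := G.exists_forall_not_adj_of_odd_card hodd fun x hx y hy z hz hxy hxz ↦
    h4.eq_of_adj_of_adj (hmem.mp hx).1.ne (hmem.mp hy).1 (hmem.mp hz).1 hxy hxz
  obtain ⟨hvx, hxw, hwx⟩ := hmem.mp hx
  have hcommon : G.neighborFinset x ∩ G.neighborFinset v = ∅ := by
    refine eq_empty_of_forall_notMem fun y hy ↦ ?_
    simp only [mem_inter, mem_neighborFinset] at hy
    refine hisol y (hmem.mpr ⟨hy.2, ?_, fun hwy ↦ ?_⟩) hy.1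
    · rintro rfl
      exact hwx hy.1.symm
    · exact h4.not_adj_of_adj_of_adj hvw hvx hwy hxw hy.2.ne' hy.1
  refine ⟨x, hx, ?_⟩
  have hdeg := h4.degree_le_card_outerNeighbors_add hvw hvx hxw
  rw [hcommon, card_empty] at hdeg
  exact (G.minDegree_le_degree x).trans hdeg

lemma sum_privateNeighbors_gt (h4 : CycleFree G 4) (hvw : G.Adj v w) (hodd : Odd G.minDegree)
    (hδ : 2 ≤ G.minDegree) :
    (G.minDegree - 1) * (G.minDegree - 2) <
      ∑ x ∈ G.privateNeighbors v w, (#(G.outerNeighbors v w x) + 1) := by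
  set δ := G.minDegree
  have hlower : ∀ x ∈ G.privateNeighbors v w, δ - 1 ≤ #(G.outerNeighbors v w x) + 1 := fun x hx ↦ by
    have := h4.minDegree_le_card_outerNeighbors_add_two hvw (privateNeighbors_subset_firstLayer hx)
    omega
  have hcard : δ - 2 ≤ #(G.privateNeighbors v w) := by
    have := card_privateNeighbors_add hvw
    have := h4.card_neighborFinset_inter_le_one hvw.ne
    have := G.minDegree_le_degree v
    omega
  rcases hcard.eq_or_lt with hcard | hcard
  · obtain ⟨x, hx, hxδ⟩ := h4.exists_minDegree_le_card_outerNeighbors_add_one hvw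
      (by rw [← hcard]; exact Nat.Odd.sub_even hδ hodd even_two)
    calc (δ - 1) * (δ - 2) = ∑ x ∈ G.privateNeighbors v w, (δ - 1) := by simp [← hcard, mul_comm]
      _ < _ := sum_lt_sum hlower ⟨x, hx, by omega⟩
  · calc (δ - 1) * (δ - 2) < (δ - 1) * (δ - 1) := Nat.mul_lt_mul_of_pos_left (by omega) (by omega)
      _ ≤ #(G.privateNeighbors v w) * (δ - 1) := by rw [mul_comm]; gcongr; omega
      _ ≤ _ := h4.card_mul_le_sum_outerNeighbors hvw privateNeighbors_subset_firstLayer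

lemma sum_firstLayer_ge_of_odd (h4 : CycleFree G 4) (hvw : G.Adj v w) (hodd : Odd G.minDegree)
    (hδ : 2 ≤ G.minDegree) (hc : #(G.neighborFinset v ∩ G.neighborFinset w) = 1) :
    2 * ((G.minDegree - 1) * (G.minDegree - 2) + 1) + (G.minDegree - 1) ≤
      ∑ x ∈ G.firstLayer v w, (#(G.outerNeighbors v w x) + 1) := by
  have hsv := h4.sum_privateNeighbors_gt hvw hodd hδ
  have hsw := h4.sum_privateNeighbors_gt hvw.symm hodd hδ
  simp_rw [← outerNeighbors_comm v w] at hsw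
  have hsc := h4.card_mul_le_sum_outerNeighbors hvw (inter_subset_firstLayer (v := v) (w := w))
  rw [hc, one_mul] at hsc
  rw [sum_firstLayer_eq]
  omega

lemma pairwiseDisjoint_insert_outerNeighbors (h4 : CycleFree G 4) (h5 : CycleFree G 5)
    (hvw : G.Adj v w) :
    (G.firstLayer v w : Set V).PairwiseDisjoint fun x ↦ insert x (G.outerNeighbors v w x) := by
  have hnear {x y : V} (hx : x ∈ G.firstLayer v w) : x ∉ G.outerNeighbors v w y := by
    rcases mem_firstLayer.mp hx with ⟨hvx, -⟩ | ⟨hwx, -⟩ <;> simp [mem_outerNeighbors, *]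
  intro x hx y hy hxy
  rw [Function.onFun, Finset.disjoint_left]
  intro z hzx hzy
  rcases mem_insert.mp hzx with rfl | hzx
  · rcases mem_insert.mp hzy with rfl | hzy
    exacts [hxy rfl, hnear hx hzy]
  rcases mem_insert.mp hzy with rfl | hzy
  · exact hnear hy hzx
  obtain ⟨hxz, hvz, hwz⟩ := mem_outerNeighbors.mp hzx
  obtain ⟨hyz, -, -⟩ := mem_outerNeighbors.mp hzy
  have hzv : z ≠ v := by rintro rfl; exact hwz hvw.symm
  have hzw : z ≠ w := by rintro rfl; exact hvz hvw
  rcases mem_firstLayer.mp hx with ⟨hvx, hxw⟩ | ⟨hwx, hxv⟩ <;>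
    rcases mem_firstLayer.mp hy with ⟨hvy, hyw⟩ | ⟨hwy, hyv⟩
  · exact hxy (h4.eq_of_adj_of_adj hzv.symm hvx hvy hxz.symm hyz.symm)
  · exact h5.not_five_cycle hvx hxz hyz.symm hwy.symm hvw.symm hzv.symm hyv.symm hxy hxw hzw
  · exact h5.not_five_cycle hwx hxz hyz.symm hvy.symm hvw hzw.symm hyw.symm hxy hxv hzv
  · exact hxy (h4.eq_of_adj_of_adj hzw.symm hwx hwy hxz.symm hyz.symm)

lemma two_add_sum_le_ncard (h4 : CycleFree G 4) (h5 : CycleFree G 5) (hvw : G.Adj v w) :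
    2 + ∑ x ∈ G.firstLayer v w, (#(G.outerNeighbors v w x) + 1) ≤
      {x : V | G.edist v x ≤ 2 ∨ G.edist w x ≤ 2}.ncard := by
  set U := (G.firstLayer v w).biUnion fun x ↦ insert x (G.outerNeighbors v w x)
  have hcardU : #U = ∑ x ∈ G.firstLayer v w, (#(G.outerNeighbors v w x) + 1) := by
    rw [card_biUnion (h4.pairwiseDisjoint_insert_outerNeighbors h5 hvw)]
    exact sum_congr rfl fun x _ ↦ card_insert_of_notMem (by simp [mem_outerNeighbors])
  have hmemU {z : V} (hz : z ∈ U) : ∃ x ∈ G.firstLayer v w, z = x ∨ z ∈ G.outerNeighbors v w x := by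
    simpa only [U, mem_biUnion, mem_insert] using hz
  have hvU : v ∉ U := fun hv ↦ by
    obtain ⟨x, hx, rfl | hv⟩ := hmemU hv
    exacts [(mem_firstLayer.mp hx).elim (fun h ↦ h.1.ne rfl) (fun h ↦ h.2 rfl),
      (mem_outerNeighbors.mp hv).2.2 hvw.symm]
  have hwU : w ∉ U := fun hw ↦ by
    obtain ⟨x, hx, rfl | hw⟩ := hmemU hw
    exacts [(mem_firstLayer.mp hx).elim (fun h ↦ h.2 rfl) (fun h ↦ h.1.ne rfl),
      (mem_outerNeighbors.mp hw).2.1 hvw]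
  have hsub : (↑(insert v (insert w U)) : Set V) ⊆
      {x : V | G.edist v x ≤ 2 ∨ G.edist w x ≤ 2} := by
    intro z hz
    simp only [coe_insert, Set.mem_insert_iff, mem_coe] at hz
    rcases hz with rfl | rfl | hz
    · simp
    · simp
    obtain ⟨x, hx, hzx⟩ := hmemU hz
    have hedist {a : V} (hax : G.Adj a x) : G.edist a z ≤ 2 := by
      rcases hzx with rfl | hxz
      exacts [(Walk.cons hax .nil).edist_le.trans (by simp),
        (Walk.cons hax (.cons (mem_outerNeighbors.mp hxz).1 .nil)).edist_le.trans (by simp)]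
    rcases mem_firstLayer.mp hx with ⟨hvx, -⟩ | ⟨hwx, -⟩
    exacts [.inl (hedist hvx), .inr (hedist hwx)]
  calc 2 + ∑ x ∈ G.firstLayer v w, (#(G.outerNeighbors v w x) + 1)
      = #(insert v (insert w U)) := by
        rw [card_insert_of_notMem (by simp [hvw.ne, hvU]), card_insert_of_notMem hwU, hcardU]
        omega
    _ = (↑(insert v (insert w U)) : Set V).ncard := (Set.ncard_coe_finset _).symm
    _ ≤ _ := Set.ncard_le_ncard hsub (Set.toFinite _)

end CycleFree

theorem stmt_3 {V : Type*} [Fintype V] (G : SimpleGraph V) [DecidableRel G.Adj]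
    (h4 : CycleFree G 4) (h5 : CycleFree G 5) (δ : ℕ) (hδ : δ = G.minDegree) (h3 : 3 ≤ δ)
    (v w : V) (hvw : G.Adj v w) :
    (Even δ → 2 * δ ^ 2 - 5 * δ + 5 ≤ {x : V | G.edist v x ≤ 2 ∨ G.edist w x ≤ 2}.ncard) ∧
      (Odd δ → 2 * δ ^ 2 - 5 * δ + 7 ≤ {x : V | G.edist v x ≤ 2 ∨ G.edist w x ≤ 2}.ncard) := by
  classical
  have hball := h4.two_add_sum_le_ncard h5 hvw
  have hsum := h4.card_mul_le_sum_outerNeighbors hvw subset_rfl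
  have hlayer := card_firstLayer_add hvw
  have hcommon := h4.card_neighborFinset_inter_le_one hvw.ne
  have hdv := G.minDegree_le_degree v
  have hdw := G.minDegree_le_degree w
  obtain ⟨m, rfl⟩ : ∃ m, δ = m + 3 := ⟨δ - 3, by omega⟩
  rw [← hδ] at hsum hdv hdw
  simp only [Nat.reduceSubDiff] at hsum
  refine ⟨fun _ ↦ ?_, fun hodd ↦ ?_⟩
  · calc 2 * (m + 3) ^ 2 - 5 * (m + 3) + 5 = (2 * m + 3) * (m + 2) + 2 := by ring_nf; omega
      _ ≤ #(G.firstLayer v w) * (m + 2) + 2 := by gcongr; omega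
      _ ≤ _ := by omega
  rcases Nat.le_one_iff_eq_zero_or_eq_one.mp hcommon with hc | hc
  · calc 2 * (m + 3) ^ 2 - 5 * (m + 3) + 7 ≤ (2 * m + 4) * (m + 2) + 2 := by ring_nf; omega
      _ ≤ #(G.firstLayer v w) * (m + 2) + 2 := by gcongr; omega
      _ ≤ _ := by omega
  have hodd_sum := h4.sum_firstLayer_ge_of_odd hvw (hδ ▸ hodd) (by omega) hc
  rw [← hδ] at hodd_sum
  simp only [Nat.reduceSubDiff] at hodd_sum
  calc 2 * (m + 3) ^ 2 - 5 * (m + 3) + 7 = 2 * ((m + 2) * (m + 1) + 1) + (m + 2) + 2 := by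
        ring_nf; omega
    _ ≤ _ := by omega
end

section
/- Let G be a finite simple (C₄,C₅)-free graph of minimum degree δ ≥ 3 and maximum degree Δ. If v is a vertex of degree Δ, then the number of vertices at distance at most 3 from v satisfies |N_{≤3}(v)| ≥ Δ(δ−1) + (δ−2)·√(Δ(δ−3)) + 3/2. -/
open SimpleGraph

/-!
Split the vertices by their distance from `v` into layers `L₀ = {v}, L₁, L₂, L₃`, so `|L₁| = Δ`.
As `G` has no 4-cycle, a vertex `x ≠ v` has at most one neighbour in `L₁`; as it has no 5-cycle
either, the two ends of an edge inside `L₂` hang below the same vertex of `L₁`, so a vertex of `L₂`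
has at most one neighbour in `L₂`. Hence every vertex of `L₁ ∪ L₂` has at least `δ - 2` neighbours
in the next layer, and these forward neighbourhoods are disjoint over `L₁`: `|L₂| ≥ Δ(δ - 2)`.

Let `x ∈ L₃` have the largest number `s` of neighbours in `L₂`. Counting the edges between `L₂`
and `L₃` gives `s|L₃| ≥ (δ - 2)|L₂| ≥ Δ(δ - 2)²`, while the forward neighbourhoods of the
neighbours of `x`, with `x` removed, are disjoint, so `|L₃| ≥ 1 + s(δ - 3)`. By AM-GM the two
bounds give `2|L₃| ≥ 1 + 2(δ - 2)√(Δ(δ - 3))`.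
-/

open Finset

section

variable {V : Type*} {G : SimpleGraph V}

theorem CycleFree.commonNeighbors_subsingleton (h4 : CycleFree G 4) {a b : V}
    (hab : a ≠ b) : (G.commonNeighbors a b).Subsingleton := by
  rintro x ⟨hax : G.Adj a x, hbx : G.Adj b x⟩ y ⟨hay : G.Adj a y, hby : G.Adj b y⟩
  by_contra hxy
  refine h4 (.cons hax (.cons hbx.symm (.cons hby (.cons hay.symm .nil)))) ?_ rfl
  simp [Walk.isCycle_def, Walk.isTrail_def, hax.ne, hay.ne, hby.ne, hax.ne', hbx.ne', hay.ne',
    hab, hab.symm, hxy]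

theorem CycleFree.eq_of_pentagon (h5 : CycleFree G 5) {a b c d e : V}
    (hab : G.Adj a b) (hbc : G.Adj b c) (hcd : G.Adj c d) (hde : G.Adj d e) (hea : G.Adj e a)
    (hac : a ≠ c) (had : a ≠ d) (hbd : b ≠ d) (hce : c ≠ e) : b = e := by
  by_contra hbe
  refine h5 (.cons hab (.cons hbc (.cons hcd (.cons hde (.cons hea .nil))))) ?_ rfl
  simp [Walk.isCycle_def, hab.ne, hbc.ne, hcd.ne, hde.ne, hea.ne, hab.ne', hea.ne', hac, had, hbd,
    hbe, hce, hac.symm, had.symm]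

theorem CycleFree.disjoint_filter_adj [DecidableRel G.Adj] (h4 : CycleFree G 4)
    {a b z : V} {s : Finset V} (hab : a ≠ b) (hz : z ∈ G.commonNeighbors a b) (hzs : z ∉ s) :
    Disjoint {y ∈ s | G.Adj a y} {y ∈ s | G.Adj b y} := by
  refine Finset.disjoint_left.2 fun y hya hyb => ?_
  rw [mem_filter] at hya hyb
  obtain rfl := h4.commonNeighbors_subsingleton hab ⟨hya.2, hyb.2⟩ hz
  exact hzs hya.1

namespace SimpleGraph

variable {v x y : V}

theorem edist_le_edist_add_one_of_adj (h : G.Adj x y) : G.edist v y ≤ G.edist v x + 1 :=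
  (G.edist_triangle).trans_eq (by rw [edist_eq_one_iff_adj.2 h])

theorem edist_eq_or_of_adj {k : ℕ} (hx : G.edist v x = k + 1) (h : G.Adj x y) :
    G.edist v y = k ∨ G.edist v y = k + 1 ∨ G.edist v y = k + 2 := by
  have hup := edist_le_edist_add_one_of_adj (v := v) h
  have hdown := edist_le_edist_add_one_of_adj (v := v) h.symm
  rw [hx] at hup hdown
  lift G.edist v y to ℕ using ne_top_of_le_ne_top (by simp) hup with n
  norm_cast at hup hdown ⊢
  omega

theorem ne_of_edist_eq_succ {k : ℕ} (hx : G.edist v x = k + 1) : x ≠ v := by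
  rintro rfl
  rw [edist_self] at hx
  exact_mod_cast hx

theorem exists_adj_of_edist_eq_succ {n : ℕ} (hx : G.edist v x = n + 1) :
    ∃ w, G.edist v w = n ∧ G.Adj w x := by
  have hxv := ne_of_edist_eq_succ hx
  obtain ⟨p, hp⟩ := exists_walk_of_edist_eq_coe (k := n + 1) hx
  obtain ⟨w, hxw, q, hq⟩ := Walk.exists_eq_cons_of_ne hxv p.reverse
  have hqlen : q.length = n := by
    have := congrArg Walk.length hq
    simp only [Walk.length_reverse, Walk.length_cons, hp] at this
    omega
  refine ⟨w, le_antisymm ((edist_le q.reverse).trans (by simp [hqlen])) ?_, hxw.symm⟩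
  have := edist_le_edist_add_one_of_adj (v := v) hxw.symm
  rw [hx] at this
  exact (ENat.add_le_add_iff_right ENat.one_ne_top).1 this

theorem adj_of_adj_of_edist_eq_two (h5 : CycleFree G 5) {u : V} (hx : G.edist v x = 2)
    (hy : G.edist v y = 2) (hxy : G.Adj x y) (hvu : G.Adj v u) (hux : G.Adj u x) : G.Adj u y := by
  obtain ⟨u', hu', hu'y⟩ := exists_adj_of_edist_eq_succ (n := 1) hy
  have hne {a b : V} : G.edist v a ≠ G.edist v b → a ≠ b := ne_of_apply_ne (G.edist v)
  have hvu' := edist_eq_one_iff_adj.2 hvu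
  obtain rfl : u = u' := h5.eq_of_pentagon hvu hux hxy hu'y.symm (edist_eq_one_iff_adj.1 hu').symm
    (hne (by simp [hx])) (hne (by simp [hy])) (hne (by simp [hvu', hy])) (hne (by simp [hx, hu']))
  exact hu'y

section Layers

variable [Fintype V]

open scoped Classical in
noncomputable def distLayer (G : SimpleGraph V) (v : V) (n : ℕ) : Finset V :=
  {x | G.edist v x = n}

@[simp]
theorem mem_distLayer {n : ℕ} : x ∈ G.distLayer v n ↔ G.edist v x = n := by
  simp [distLayer]

theorem distLayer_zero : G.distLayer v 0 = {v} := by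
  ext x
  rw [mem_distLayer, mem_singleton, Nat.cast_zero, edist_eq_zero_iff, eq_comm]

theorem distLayer_one [DecidableRel G.Adj] : G.distLayer v 1 = G.neighborFinset v := by
  ext x
  simp [edist_eq_one_iff_adj]

theorem ncard_edist_le_eq_sum (n : ℕ) :
    {x | G.edist v x ≤ n}.ncard = ∑ k ∈ range (n + 1), #(G.distLayer v k) := by
  classical
  have hball : {x | G.edist v x ≤ n} = ↑((range (n + 1)).biUnion (G.distLayer v)) := by
    ext x
    simp only [Set.mem_ofPred_eq, coe_biUnion, coe_range, Set.mem_iUnion, mem_coe, mem_distLayer,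
      Set.mem_Iio, exists_prop, Nat.lt_succ_iff, ENat.le_natCast_iff]
    exact ⟨fun ⟨k, h, hk⟩ => ⟨k, hk, h⟩, fun ⟨k, hk, h⟩ => ⟨k, h, hk⟩⟩
  rw [hball, Set.ncard_coe_finset, card_biUnion]
  intro i _ j _ hij
  refine Finset.disjoint_left.2 fun x hi hj => hij ?_
  rw [mem_distLayer] at hi hj
  exact_mod_cast hi.symm.trans hj

variable [DecidableRel G.Adj] {k n m δ : ℕ}

theorem degree_le_card_adj_distLayer (hx : G.edist v x = k + 1) :
    G.degree x ≤ #{y ∈ G.distLayer v k | G.Adj x y} + #{y ∈ G.distLayer v (k + 1) | G.Adj x y} +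
      #{y ∈ G.distLayer v (k + 2) | G.Adj x y} := by
  classical
  rw [← card_neighborFinset_eq_degree]
  refine (card_le_card ?_).trans
    ((card_union_le _ _).trans (Nat.add_le_add_right (card_union_le _ _) _))
  intro y hy
  rw [mem_neighborFinset] at hy
  simp only [mem_union, mem_filter, mem_distLayer, hy, and_true, or_assoc]
  exact edist_eq_or_of_adj hx hy

theorem card_adj_distLayer_zero_le_one : #{y ∈ G.distLayer v 0 | G.Adj x y} ≤ 1 := by
  rw [distLayer_zero]
  exact (card_filter_le _ _).trans (card_singleton v).le

theorem card_adj_distLayer_one_le_one (h4 : CycleFree G 4) (hx : x ≠ v) :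
    #{y ∈ G.distLayer v 1 | G.Adj x y} ≤ 1 := by
  refine card_le_one.2 fun a ha b hb => ?_
  simp only [mem_filter, mem_distLayer, Nat.cast_one, edist_eq_one_iff_adj] at ha hb
  exact h4.commonNeighbors_subsingleton hx.symm ⟨ha.1, ha.2⟩ ⟨hb.1, hb.2⟩

theorem card_adj_distLayer_two_le_one (h4 : CycleFree G 4) (h5 : CycleFree G 5)
    (hx : G.edist v x = 2) : #{y ∈ G.distLayer v 2 | G.Adj x y} ≤ 1 := by
  refine card_le_one.2 fun a ha b hb => ?_
  simp only [mem_filter, mem_distLayer, Nat.cast_ofNat] at ha hb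
  by_contra hab
  obtain ⟨u, hu, hux⟩ := exists_adj_of_edist_eq_succ (n := 1) hx
  have hxu : x ≠ u := ne_of_apply_ne (G.edist v) (by simp [hx, hu])
  rw [Nat.cast_one, edist_eq_one_iff_adj] at hu
  exact hxu (h4.commonNeighbors_subsingleton hab ⟨ha.2.symm, hb.2.symm⟩
    ⟨(adj_of_adj_of_edist_eq_two h5 hx ha.1 ha.2 hu hux).symm,
      (adj_of_adj_of_edist_eq_two h5 hx hb.1 hb.2 hu hux).symm⟩)

theorem sub_two_le_card_adj_distLayer (h4 : CycleFree G 4) (h5 : CycleFree G 5)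
    (hδ : δ ≤ G.degree x) (hx : G.edist v x = k + 1) (hk : k ≤ 1) :
    δ - 2 ≤ #{y ∈ G.distLayer v (k + 2) | G.Adj x y} := by
  have hdeg := degree_le_card_adj_distLayer hx
  have hxv := ne_of_edist_eq_succ hx
  have hback :
      #{y ∈ G.distLayer v k | G.Adj x y} + #{y ∈ G.distLayer v (k + 1) | G.Adj x y} ≤ 2 := by
    interval_cases k
    · exact add_le_add card_adj_distLayer_zero_le_one (card_adj_distLayer_one_le_one h4 hxv)
    · exact add_le_add (card_adj_distLayer_one_le_one h4 hxv)
        (card_adj_distLayer_two_le_one h4 h5 hx)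
  omega

theorem degree_mul_sub_two_le_card_distLayer_two (h4 : CycleFree G 4) (h5 : CycleFree G 5)
    (hδ : ∀ x, δ ≤ G.degree x) : G.degree v * (δ - 2) ≤ #(G.distLayer v 2) := by
  classical
  have hdisj : (G.neighborFinset v : Set V).PairwiseDisjoint
      fun u => {y ∈ G.distLayer v 2 | G.Adj u y} := fun u hu u' hu' hne =>
    h4.disjoint_filter_adj hne (z := v) ⟨(G.mem_neighborFinset v u).1 hu |>.symm,
      (G.mem_neighborFinset v u').1 hu' |>.symm⟩ (by simp)
  calc G.degree v * (δ - 2) = ∑ _u ∈ G.neighborFinset v, (δ - 2) := by simp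
    _ ≤ ∑ u ∈ G.neighborFinset v, #{y ∈ G.distLayer v 2 | G.Adj u y} :=
      sum_le_sum fun u hu => sub_two_le_card_adj_distLayer h4 h5 (hδ u)
        (edist_eq_one_iff_adj.2 ((G.mem_neighborFinset v u).1 hu)) zero_le_one
    _ = #((G.neighborFinset v).biUnion fun u => {y ∈ G.distLayer v 2 | G.Adj u y}) :=
      (card_biUnion hdisj).symm
    _ ≤ #(G.distLayer v 2) := card_le_card (biUnion_subset.2 fun _ _ => filter_subset _ _)

theorem one_add_mul_le_card_distLayer_succ (h4 : CycleFree G 4) (hx : x ∈ G.distLayer v (n + 1))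
    (hm : ∀ w ∈ G.distLayer v n, m ≤ #{y ∈ G.distLayer v (n + 1) | G.Adj w y}) :
    1 + #{w ∈ G.distLayer v n | G.Adj w x} * (m - 1) ≤ #(G.distLayer v (n + 1)) := by
  classical
  set W := {w ∈ G.distLayer v n | G.Adj w x}
  set L := (G.distLayer v (n + 1)).erase x
  have hdisj : (W : Set V).PairwiseDisjoint fun w => {y ∈ L | G.Adj w y} := fun w hw w' hw' hne =>
    h4.disjoint_filter_adj hne (z := x) ⟨(mem_filter.1 hw).2, (mem_filter.1 hw').2⟩
      (notMem_erase x _)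
  calc 1 + #W * (m - 1) = 1 + ∑ _w ∈ W, (m - 1) := by simp
    _ ≤ 1 + ∑ w ∈ W, #{y ∈ L | G.Adj w y} := by
      gcongr with w hw
      rw [filter_erase]
      exact (Nat.sub_le_sub_right (hm w (mem_filter.1 hw).1) 1).trans pred_card_le_card_erase
    _ = 1 + #(W.biUnion fun w => {y ∈ L | G.Adj w y}) := by rw [card_biUnion hdisj]
    _ ≤ 1 + #L := by gcongr; exact biUnion_subset.2 fun _ _ => filter_subset _ _
    _ = #(G.distLayer v (n + 1)) := by rw [add_comm, card_erase_add_one hx]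

theorem exists_bounds_card_distLayer_succ (h4 : CycleFree G 4)
    (hm : ∀ w ∈ G.distLayer v n, m ≤ #{y ∈ G.distLayer v (n + 1) | G.Adj w y})
    (hne : (G.distLayer v (n + 1)).Nonempty) :
    ∃ s, 0 < s ∧ 1 + s * (m - 1) ≤ #(G.distLayer v (n + 1)) ∧
      #(G.distLayer v n) * m ≤ #(G.distLayer v (n + 1)) * s := by
  obtain ⟨x, hx, hmax⟩ :=
    (G.distLayer v (n + 1)).exists_max_image (fun x => #{w ∈ G.distLayer v n | G.Adj w x}) hne
  refine ⟨_, ?_, one_add_mul_le_card_distLayer_succ h4 hx hm, card_mul_le_card_mul G.Adj hm hmax⟩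
  obtain ⟨w, hw, hwx⟩ := exists_adj_of_edist_eq_succ (mem_distLayer.1 hx)
  exact card_pos.2 ⟨w, mem_filter.2 ⟨mem_distLayer.2 hw, hwx⟩⟩

end Layers

end SimpleGraph

end

theorem half_add_mul_sqrt_le {c r p s N : ℝ} (hr : 0 ≤ r) (hp : 0 ≤ p) (hs : 0 < s)
    (h1 : 1 + s * p ≤ N) (h2 : r * c ^ 2 ≤ N * s) : 1 / 2 + c * √(r * p) ≤ N := by
  rw [Real.sqrt_mul hr]
  have hsr := Real.sq_sqrt hr
  have hsp := Real.sq_sqrt hp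
  have hamgm : 2 * s * (c * (√r * √p)) ≤ s ^ 2 * p + r * c ^ 2 := by
    nlinarith [sq_nonneg (s * √p - c * √r)]
  refine le_of_mul_le_mul_left ?_ hs
  nlinarith

theorem stmt_5_general {V : Type*} [Fintype V] (G : SimpleGraph V) [DecidableRel G.Adj]
    (h4 : CycleFree G 4) (h5 : CycleFree G 5) (δ Δ : ℕ) (hδ : δ = G.minDegree) (h3 : 3 ≤ δ)
    (v : V) (hv : G.degree v = Δ) :
    (Δ : ℝ) * ((δ : ℝ) - 1) + ((δ : ℝ) - 2) * Real.sqrt ((Δ : ℝ) * ((δ : ℝ) - 3)) + 3 / 2 ≤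
      ({x : V | G.edist v x ≤ 3}.ncard : ℝ) := by
  obtain ⟨d, rfl⟩ : ∃ d, δ = d + 3 := ⟨δ - 3, by omega⟩
  have hδle : ∀ x, d + 3 ≤ G.degree x := hδ ▸ G.minDegree_le_degree
  have hfwd : ∀ w ∈ G.distLayer v 2, d + 1 ≤ #{y ∈ G.distLayer v 3 | G.Adj w y} := fun w hw =>
    sub_two_le_card_adj_distLayer (k := 1) h4 h5 (hδle w) (mem_distLayer.1 hw) le_rfl
  have hL2 : Δ * (d + 1) ≤ #(G.distLayer v 2) :=
    hv ▸ degree_mul_sub_two_le_card_distLayer_two h4 h5 hδle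
  obtain ⟨w, hw⟩ : (G.distLayer v 2).Nonempty :=
    card_pos.1 ((Nat.mul_pos (hv ▸ (hδle v).trans_lt' (by omega)) d.succ_pos).trans_le hL2)
  obtain ⟨s, hs, h1, h2⟩ := exists_bounds_card_distLayer_succ (n := 2) h4 hfwd
    (card_pos.1 (d.succ_pos.trans_le ((hfwd w hw).trans (card_filter_le _ _))))
  have hsq : Δ * (d + 1) ^ 2 ≤ #(G.distLayer v 3) * s := by
    rw [sq, ← mul_assoc]
    exact (Nat.mul_le_mul_right (d + 1) hL2).trans h2
  have hball := ncard_edist_le_eq_sum (G := G) (v := v) 3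
  simp only [sum_range_succ, range_zero, sum_empty, distLayer_zero, distLayer_one,
    card_singleton, card_neighborFinset_eq_degree, hv, Nat.cast_ofNat] at hball
  have key := half_add_mul_sqrt_le (c := d + 1) (r := Δ) (p := d) (s := s)
    (N := #(G.distLayer v 3)) (by positivity) (by positivity) (by exact_mod_cast hs)
    (by exact_mod_cast h1) (by exact_mod_cast hsq)
  rw [hball]
  push_cast at key ⊢
  rw [show (d : ℝ) + 3 - 3 = d by ring, show (d : ℝ) + 3 - 2 = d + 1 by ring]
  linarith [(by exact_mod_cast hL2 : (Δ : ℝ) * (d + 1) ≤ #(G.distLayer v 2))]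

theorem stmt_5 {V : Type*} [Fintype V] (G : SimpleGraph V) [DecidableRel G.Adj]
    (h4 : CycleFree G 4) (h5 : CycleFree G 5) (δ Δ : ℕ) (hδ : δ = G.minDegree) (h3 : 3 ≤ δ)
    (hΔ : Δ = G.maxDegree) (v : V) (hv : G.degree v = Δ) :
    (Δ : ℝ) * ((δ : ℝ) - 1) + ((δ : ℝ) - 2) * Real.sqrt ((Δ : ℝ) * ((δ : ℝ) - 3)) + 3 / 2 ≤
      ({x : V | G.edist v x ≤ 3}.ncard : ℝ) :=
  stmt_5_general G h4 h5 δ Δ hδ h3 v hv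
end

section
/- Let δ ∈ ℕ be such that δ − 1 is a prime power, and let δ* = 2δ² − 2δ + 2. Then for every even ℓ ∈ ℕ with ℓ ≥ 2 there exists a connected bipartite C₄-free graph G of minimum degree δ and order n = ℓ·δ* such that avec(G) ≥ 9n/(2δ*) − 5. In particular there are infinitely many such graphs. -/
open SimpleGraph

set_option linter.unusedSectionVars false
set_option maxHeartbeats 1000000
namespace C4C

inductive EV (F : Type) : Type
  | pt : F → F → EV F
  | ln : Option F → F → EV F
  | sl : Option F → EV F
  | ap : EV F

inductive GV (F : Type) : Type
  | ap1 : GV F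
  | vx : F → GV F
  | pt : F → F → GV F
  | ln : F → F → GV F
  | sl : F → GV F
  | ap2 : GV F

variable {F : Type} [Field F] [Fintype F] (k : ℕ)

abbrev V (F : Type) (k : ℕ) : Type := EV F ⊕ ((Fin k × GV F) ⊕ EV F)

def L {F : Type} {k : ℕ} : EV F → V F k := Sum.inl
def Gd {F : Type} {k : ℕ} (i : Fin k) (g : GV F) : V F k := Sum.inr (Sum.inl (i, g))
def R {F : Type} {k : ℕ} : EV F → V F k := fun e => Sum.inr (Sum.inr e)

def onL (s : Option F) (c x y : F) : Prop :=
  match s with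
  | some m => y = m*x + c
  | none => x = c

lemma sameSlope {s : Option F} {c1 c2 x y : F} (h1 : onL s c1 x y) (h2 : onL s c2 x y) :
    c1 = c2 := by
  cases s <;> simp only [onL] at h1 h2
  · exact h1.symm.trans h2
  · linear_combination h2 - h1

lemma twoLines {m1 c1 m2 c2 x y x' y' : F} (e1 : y = m1*x+c1) (e2 : y = m2*x+c2)
    (e3 : y' = m1*x'+c1) (e4 : y' = m2*x'+c2) :
    (m1 = m2 ∧ c1 = c2) ∨ (x = x' ∧ y = y') := by
  by_cases hm : m1 = m2
  · subst hm
    exact Or.inl ⟨rfl, by linear_combination e2 - e1⟩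
  · have h5 : (m1 - m2) * x = (m1 - m2) * x' := by linear_combination e2 - e1 - e4 + e3
    have hx : x = x' := mul_left_cancel₀ (sub_ne_zero.2 hm) h5
    subst hx
    exact Or.inr ⟨rfl, by linear_combination e1 - e3⟩

lemma twoLinesO {s1 s2 : Option F} {c1 c2 x y x' y' : F} (e1 : onL s1 c1 x y)
    (e2 : onL s2 c2 x y) (e3 : onL s1 c1 x' y') (e4 : onL s2 c2 x' y') :
    (s1 = s2 ∧ c1 = c2) ∨ (x = x' ∧ y = y') := by
  cases s1 <;> cases s2 <;> simp only [onL] at e1 e2 e3 e4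
  · exact Or.inl ⟨rfl, e1.symm.trans e2⟩
  · have hx : x = x' := e1.trans e3.symm
    exact Or.inr ⟨hx, by rw [e2, e4, hx]⟩
  · have hx : x = x' := e2.trans e4.symm
    exact Or.inr ⟨hx, by rw [e1, e3, hx]⟩
  · rcases twoLines e1 e2 e3 e4 with ⟨h, h'⟩ | h
    · exact Or.inl ⟨by rw [h], h'⟩
    · exact Or.inr h

def r : V F k → V F k → Prop
  | .inl (.pt x y), .inl (.ln s c) => onL s c x y
  | .inl (.ln s _), .inl (.sl s') => s = s'
  | .inl (.sl _), .inl .ap => True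
  | .inl .ap, .inr (.inl (i, .ap1)) => i.val = 0
  | .inl .ap, .inr (.inr .ap) => k = 0
  | .inr (.inl (i, .ap1)), .inr (.inl (j, .vx _)) => i = j
  | .inr (.inl (i, .vx x)), .inr (.inl (j, .pt x' _)) => i = j ∧ x = x'
  | .inr (.inl (i, .pt x y)), .inr (.inl (j, .ln m c)) => i = j ∧ y = m*x + c
  | .inr (.inl (i, .ln m _)), .inr (.inl (j, .sl m')) => i = j ∧ m = m'
  | .inr (.inl (i, .sl _)), .inr (.inl (j, .ap2)) => i = j
  | .inr (.inl (i, .ap2)), .inr (.inl (j, .ap1)) => j.val = i.val + 1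
  | .inr (.inl (i, .ap2)), .inr (.inr .ap) => i.val + 1 = k
  | .inr (.inr .ap), .inr (.inr (.sl _)) => True
  | .inr (.inr (.sl s)), .inr (.inr (.ln s' _)) => s = s'
  | .inr (.inr (.ln s c)), .inr (.inr (.pt x y)) => onL s c x y
  | _, _ => False

def AD (u v : V F k) : Prop := r k u v ∨ r k v u

lemma AD.symm {u v : V F k} (h : AD k u v) : AD k v u := h.elim Or.inr Or.inl

lemma A1 {w : V F k} {x y : F} (h : AD k w (L (.pt x y))) :
    ∃ s c, w = L (.ln s c) ∧ onL s c x y := by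
  rcases w with (w | ⟨⟨i, w⟩ | w⟩) <;> cases w <;> simp_all [AD, r, L, Gd, R] <;> tauto

lemma A2 {w : V F k} {s : Option F} {c : F} (h : AD k w (L (.ln s c))) :
    (∃ x y, w = L (.pt x y) ∧ onL s c x y) ∨ w = L (.sl s) := by
  rcases w with (w | ⟨⟨i, w⟩ | w⟩) <;> cases w <;> simp_all [AD, r, L, Gd, R] <;> tauto

lemma A3 {w : V F k} {s : Option F} (h : AD k w (L (.sl s))) :
    (∃ c, w = L (.ln s c)) ∨ w = L .ap := by
  rcases w with (w | ⟨⟨i, w⟩ | w⟩) <;> cases w <;> simp_all [AD, r, L, Gd, R] <;> tauto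

lemma A4 {w : V F k} (h : AD k w (L .ap)) :
    (∃ s, w = L (.sl s)) ∨ (∃ i : Fin k, i.val = 0 ∧ w = Gd i .ap1) ∨ (k = 0 ∧ w = R .ap) := by
  rcases w with (w | ⟨⟨i, w⟩ | w⟩) <;> cases w <;> simp_all [AD, r, L, Gd, R] <;> tauto

lemma A5 {w : V F k} {i : Fin k} (h : AD k w (Gd i .ap1)) :
    (∃ x, w = Gd i (.vx x)) ∨ (i.val = 0 ∧ w = L .ap) ∨
      (∃ j : Fin k, j.val + 1 = i.val ∧ w = Gd j .ap2) := by
  rcases w with (w | ⟨⟨j, w⟩ | w⟩) <;> cases w <;> simp_all [AD, r, L, Gd, R] <;> tauto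

lemma A6 {w : V F k} {i : Fin k} {x : F} (h : AD k w (Gd i (.vx x))) :
    w = Gd i .ap1 ∨ (∃ y, w = Gd i (.pt x y)) := by
  rcases w with (w | ⟨⟨j, w⟩ | w⟩) <;> cases w <;> simp_all [AD, r, L, Gd, R] <;> tauto

lemma A7 {w : V F k} {i : Fin k} {x y : F} (h : AD k w (Gd i (.pt x y))) :
    w = Gd i (.vx x) ∨ (∃ m c, w = Gd i (.ln m c) ∧ y = m*x + c) := by
  rcases w with (w | ⟨⟨j, w⟩ | w⟩) <;> cases w <;> simp_all [AD, r, L, Gd, R] <;> tauto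

lemma A8 {w : V F k} {i : Fin k} {m c : F} (h : AD k w (Gd i (.ln m c))) :
    (∃ x y, w = Gd i (.pt x y) ∧ y = m*x + c) ∨ w = Gd i (.sl m) := by
  rcases w with (w | ⟨⟨j, w⟩ | w⟩) <;> cases w <;> simp_all [AD, r, L, Gd, R] <;> tauto

lemma A9 {w : V F k} {i : Fin k} {m : F} (h : AD k w (Gd i (.sl m))) :
    (∃ c, w = Gd i (.ln m c)) ∨ w = Gd i .ap2 := by
  rcases w with (w | ⟨⟨j, w⟩ | w⟩) <;> cases w <;> simp_all [AD, r, L, Gd, R] <;> tauto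

lemma A10 {w : V F k} {i : Fin k} (h : AD k w (Gd i .ap2)) :
    (∃ m, w = Gd i (.sl m)) ∨ (∃ j : Fin k, j.val = i.val + 1 ∧ w = Gd j .ap1) ∨
      (i.val + 1 = k ∧ w = R .ap) := by
  rcases w with (w | ⟨⟨j, w⟩ | w⟩) <;> cases w <;> simp_all [AD, r, L, Gd, R] <;> tauto

lemma A11 {w : V F k} (h : AD k w (R .ap)) :
    (∃ s, w = R (.sl s)) ∨ (k = 0 ∧ w = L .ap) ∨
      (∃ j : Fin k, j.val + 1 = k ∧ w = Gd j .ap2) := by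
  rcases w with (w | ⟨⟨j, w⟩ | w⟩) <;> cases w <;> simp_all [AD, r, L, Gd, R] <;> tauto

lemma A12 {w : V F k} {s : Option F} (h : AD k w (R (.sl s))) :
    w = R .ap ∨ (∃ c, w = R (.ln s c)) := by
  rcases w with (w | ⟨⟨j, w⟩ | w⟩) <;> cases w <;> simp_all [AD, r, L, Gd, R] <;> tauto

lemma A13 {w : V F k} {s : Option F} {c : F} (h : AD k w (R (.ln s c))) :
    w = R (.sl s) ∨ (∃ x y, w = R (.pt x y) ∧ onL s c x y) := by
  rcases w with (w | ⟨⟨j, w⟩ | w⟩) <;> cases w <;> simp_all [AD, r, L, Gd, R] <;> tauto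

lemma A14 {w : V F k} {x y : F} (h : AD k w (R (.pt x y))) :
    ∃ s c, w = R (.ln s c) ∧ onL s c x y := by
  rcases w with (w | ⟨⟨j, w⟩ | w⟩) <;> cases w <;> simp_all [AD, r, L, Gd, R] <;> tauto

lemma master {a b c d : V F k} (hab : a ≠ b) (hcd : c ≠ d)
    (h1 : AD k a c) (h2 : AD k c b) (h3 : AD k b d) (h4 : AD k d a) : False := by
  rcases c with (c | ⟨⟨i, c⟩ | c⟩)
  -- LEFT END UNIT
  · cases c with
    | pt x y =>
      obtain ⟨s1, c1, rfl, e1⟩ := A1 k h1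
      obtain ⟨s2, c2, rfl, e2⟩ := A1 k h2.symm
      rcases A2 k h3.symm with ⟨x', y', rfl, e3⟩ | rfl
      · rcases h4 with h4 | h4 <;> simp only [r, L, Gd, R] at h4
        rcases twoLinesO e1 e2 h4 e3 with ⟨rfl, rfl⟩ | ⟨rfl, rfl⟩
        · exact hab rfl
        · exact hcd rfl
      · rcases h4 with h4 | h4 <;> simp only [r, L, Gd, R] at h4
        subst h4
        obtain rfl := sameSlope e1 e2; exact hab rfl
    | ln s c0 =>
      rcases A2 k h1 with ⟨x1, y1, rfl, e1⟩ | rfl <;>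
        rcases A2 k h2.symm with ⟨x2, y2, rfl, e2⟩ | rfl
      · obtain ⟨s3, c3, rfl, e3⟩ := A1 k h3.symm
        rcases h4 with h4 | h4 <;> simp only [r, L, Gd, R] at h4
        rcases twoLinesO e1 h4 e2 e3 with ⟨rfl, rfl⟩ | ⟨rfl, rfl⟩
        · exact hcd rfl
        · exact hab rfl
      · rcases A3 k h3.symm with ⟨c3, rfl⟩ | rfl
        · rcases h4 with h4 | h4 <;> simp only [r, L, Gd, R] at h4
          obtain rfl := sameSlope e1 h4; exact hcd rfl
        · rcases h4 with h4 | h4 <;> simp only [r, L, Gd, R] at h4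
      · obtain ⟨s3, c3, rfl, e3⟩ := A1 k h3.symm
        rcases h4 with h4 | h4 <;> simp only [r, L, Gd, R] at h4
        subst h4
        obtain rfl := sameSlope e2 e3; exact hcd rfl
      · exact hab rfl
    | sl s =>
      rcases A3 k h1 with ⟨c1, rfl⟩ | rfl <;>
        rcases A3 k h2.symm with ⟨c2, rfl⟩ | rfl
      · rcases A2 k h3.symm with ⟨x, y, rfl, e3⟩ | rfl
        · rcases h4 with h4 | h4 <;> simp only [r, L, Gd, R] at h4
          obtain rfl := sameSlope h4 e3; exact hab rfl
        · exact hcd rfl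
      · rcases A4 k h3.symm with ⟨s', rfl⟩ | (⟨i', hi', rfl⟩ | ⟨hk0, rfl⟩)
        · rcases h4 with h4 | h4 <;> simp only [r, L, Gd, R] at h4
          subst h4; exact hcd rfl
        · rcases h4 with h4 | h4 <;> simp only [r, L, Gd, R] at h4
        · rcases h4 with h4 | h4 <;> simp only [r, L, Gd, R] at h4
      · rcases A2 k h3.symm with ⟨x, y, rfl, e3⟩ | rfl
        · rcases h4 with h4 | h4 <;> simp only [r, L, Gd, R] at h4
        · exact hcd rfl
      · exact hab rfl
    | ap =>
      rcases A4 k h1 with ⟨s1, rfl⟩ | (⟨i1, hi1, rfl⟩ | ⟨hk1, rfl⟩) <;>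
        rcases A4 k h2.symm with ⟨s2, rfl⟩ | (⟨i2, hi2, rfl⟩ | ⟨hk2, rfl⟩)
      · rcases A3 k h3.symm with ⟨c2, rfl⟩ | rfl
        · rcases h4 with h4 | h4 <;> simp only [r, L, Gd, R] at h4
          subst h4; exact hab rfl
        · exact hcd rfl
      · rcases A5 k h3.symm with ⟨x, rfl⟩ | (⟨hi0, rfl⟩ | ⟨j, hj, rfl⟩)
        · rcases h4 with h4 | h4 <;> simp only [r, L, Gd, R] at h4
        · exact hcd rfl
        · omega
      · rcases A11 k h3.symm with ⟨s', rfl⟩ | (⟨hk0, rfl⟩ | ⟨j, hj, rfl⟩)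
        · rcases h4 with h4 | h4 <;> simp only [r, L, Gd, R] at h4
        · exact hcd rfl
        · omega
      · rcases A3 k h3.symm with ⟨c2, rfl⟩ | rfl
        · rcases h4 with h4 | h4 <;> simp only [r, L, Gd, R] at h4
        · exact hcd rfl
      · have : i1 = i2 := Fin.ext (by omega)
        subst this
        exact hab rfl
      · exact absurd i1.isLt (by omega)
      · rcases A3 k h3.symm with ⟨c2, rfl⟩ | rfl
        · rcases h4 with h4 | h4 <;> simp only [r, L, Gd, R] at h4
        · exact hcd rfl
      · exact absurd i2.isLt (by omega)
      · exact hab rfl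
  -- GADGET UNIT
  · cases c with
    | ap1 =>
      rcases A5 k h1 with ⟨x1, rfl⟩ | (⟨hi1, rfl⟩ | ⟨j1, hj1, rfl⟩) <;>
        rcases A5 k h2.symm with ⟨x2, rfl⟩ | (⟨hi2, rfl⟩ | ⟨j2, hj2, rfl⟩)
      · rcases A6 k h3.symm with rfl | ⟨y, rfl⟩
        · exact hcd rfl
        · rcases h4 with h4 | h4 <;> simp only [r, L, Gd, R] at h4
          obtain ⟨-, rfl⟩ := h4
          exact hab rfl
      · rcases A4 k h3.symm with ⟨s, rfl⟩ | (⟨i', hi', rfl⟩ | ⟨hk0, rfl⟩)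
        · rcases h4 with h4 | h4 <;> simp only [r, L, Gd, R] at h4
        · rcases h4 with h4 | h4 <;> simp only [r, L, Gd, R] at h4
          subst h4; exact hcd rfl
        · rcases h4 with h4 | h4 <;> simp only [r, L, Gd, R] at h4
      · rcases A10 k h3.symm with ⟨m, rfl⟩ | (⟨j', hj', rfl⟩ | ⟨hk0, rfl⟩)
        · rcases h4 with h4 | h4 <;> simp only [r, L, Gd, R] at h4
        · rcases h4 with h4 | h4 <;> simp only [r, L, Gd, R] at h4
          subst h4; exact hcd rfl
        · rcases h4 with h4 | h4 <;> simp only [r, L, Gd, R] at h4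
      · rcases A6 k h3.symm with rfl | ⟨y, rfl⟩
        · exact hcd rfl
        · rcases h4 with h4 | h4 <;> simp only [r, L, Gd, R] at h4
      · exact hab rfl
      · omega
      · rcases A6 k h3.symm with rfl | ⟨y, rfl⟩
        · exact hcd rfl
        · rcases h4 with h4 | h4 <;> simp only [r, L, Gd, R] at h4
      · omega
      · have : j1 = j2 := Fin.ext (by omega)
        subst this
        exact hab rfl
    | vx x =>
      rcases A6 k h1 with rfl | ⟨y1, rfl⟩ <;> rcases A6 k h2.symm with rfl | ⟨y2, rfl⟩
      · exact hab rfl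
      · rcases A7 k h3.symm with rfl | ⟨m, c', rfl, e3⟩
        · exact hcd rfl
        · rcases h4 with h4 | h4 <;> simp only [r, L, Gd, R] at h4
      · rcases A5 k h3.symm with ⟨x2, rfl⟩ | (⟨hi0, rfl⟩ | ⟨j, hj, rfl⟩)
        · rcases h4 with h4 | h4 <;> simp only [r, L, Gd, R] at h4
          obtain ⟨-, rfl⟩ := h4
          exact hcd rfl
        · rcases h4 with h4 | h4 <;> simp only [r, L, Gd, R] at h4
        · rcases h4 with h4 | h4 <;> simp only [r, L, Gd, R] at h4
      · rcases A7 k h3.symm with rfl | ⟨m, c', rfl, e3⟩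
        · exact hcd rfl
        · rcases h4 with h4 | h4 <;> simp only [r, L, Gd, R] at h4
          obtain ⟨-, e4⟩ := h4
          have : y1 = y2 := by linear_combination e4 - e3
          subst this
          exact hab rfl
    | pt x y =>
      rcases A7 k h1 with rfl | ⟨m1, c1, rfl, e1⟩ <;>
        rcases A7 k h2.symm with rfl | ⟨m2, c2, rfl, e2⟩
      · exact hab rfl
      · rcases A8 k h3.symm with ⟨x', y', rfl, e3⟩ | rfl
        · rcases h4 with h4 | h4 <;> simp only [r, L, Gd, R] at h4
          obtain ⟨-, rfl⟩ := h4
          have : y' = y := by linear_combination e3 - e2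
          subst this
          exact hcd rfl
        · rcases h4 with h4 | h4 <;> simp only [r, L, Gd, R] at h4
      · rcases A6 k h3.symm with rfl | ⟨y', rfl⟩
        · rcases h4 with h4 | h4 <;> simp only [r, L, Gd, R] at h4
        · rcases h4 with h4 | h4 <;> simp only [r, L, Gd, R] at h4
          obtain ⟨-, e4⟩ := h4
          have : y' = y := by linear_combination e4 - e1
          subst this
          exact hcd rfl
      · rcases A8 k h3.symm with ⟨x', y', rfl, e3⟩ | rfl
        · rcases h4 with h4 | h4 <;> simp only [r, L, Gd, R] at h4
          obtain ⟨-, e4⟩ := h4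
          rcases twoLines e1 e2 e4 e3 with ⟨rfl, rfl⟩ | ⟨rfl, rfl⟩
          · exact hab rfl
          · exact hcd rfl
        · rcases h4 with h4 | h4 <;> simp only [r, L, Gd, R] at h4
          obtain ⟨-, rfl⟩ := h4
          have : c1 = c2 := by linear_combination e2 - e1
          subst this
          exact hab rfl
    | ln m c0 =>
      rcases A8 k h1 with ⟨x1, y1, rfl, e1⟩ | rfl <;>
        rcases A8 k h2.symm with ⟨x2, y2, rfl, e2⟩ | rfl
      · rcases A7 k h3.symm with rfl | ⟨m3, c3, rfl, e3⟩
        · rcases h4 with h4 | h4 <;> simp only [r, L, Gd, R] at h4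
          obtain ⟨-, rfl⟩ := h4
          have : y1 = y2 := by linear_combination e1 - e2
          subst this
          exact hab rfl
        · rcases h4 with h4 | h4 <;> simp only [r, L, Gd, R] at h4
          obtain ⟨-, e4⟩ := h4
          rcases twoLines e1 e4 e2 e3 with ⟨rfl, rfl⟩ | ⟨rfl, rfl⟩
          · exact hcd rfl
          · exact hab rfl
      · rcases A9 k h3.symm with ⟨c3, rfl⟩ | rfl
        · rcases h4 with h4 | h4 <;> simp only [r, L, Gd, R] at h4
          obtain ⟨-, e4⟩ := h4
          have : c3 = c0 := by linear_combination e1 - e4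
          subst this
          exact hcd rfl
        · rcases h4 with h4 | h4 <;> simp only [r, L, Gd, R] at h4
      · rcases A7 k h3.symm with rfl | ⟨m3, c3, rfl, e3⟩
        · rcases h4 with h4 | h4 <;> simp only [r, L, Gd, R] at h4
        · rcases h4 with h4 | h4 <;> simp only [r, L, Gd, R] at h4
          obtain ⟨-, rfl⟩ := h4
          have : c3 = c0 := by linear_combination e2 - e3
          subst this
          exact hcd rfl
      · exact hab rfl
    | sl m =>
      rcases A9 k h1 with ⟨c1, rfl⟩ | rfl <;> rcases A9 k h2.symm with ⟨c2, rfl⟩ | rfl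
      · rcases A8 k h3.symm with ⟨x, y, rfl, e3⟩ | rfl
        · rcases h4 with h4 | h4 <;> simp only [r, L, Gd, R] at h4
          obtain ⟨-, e4⟩ := h4
          have : c1 = c2 := by linear_combination e3 - e4
          subst this
          exact hab rfl
        · exact hcd rfl
      · rcases A10 k h3.symm with ⟨m', rfl⟩ | (⟨j', hj', rfl⟩ | ⟨hk0, rfl⟩)
        · rcases h4 with h4 | h4 <;> simp only [r, L, Gd, R] at h4
          obtain ⟨-, rfl⟩ := h4
          exact hcd rfl
        · rcases h4 with h4 | h4 <;> simp only [r, L, Gd, R] at h4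
        · rcases h4 with h4 | h4 <;> simp only [r, L, Gd, R] at h4
      · rcases A8 k h3.symm with ⟨x, y, rfl, e3⟩ | rfl
        · rcases h4 with h4 | h4 <;> simp only [r, L, Gd, R] at h4
        · exact hcd rfl
      · exact hab rfl
    | ap2 =>
      rcases A10 k h1 with ⟨m1, rfl⟩ | (⟨j1, hj1, rfl⟩ | ⟨hk1, rfl⟩) <;>
        rcases A10 k h2.symm with ⟨m2, rfl⟩ | (⟨j2, hj2, rfl⟩ | ⟨hk2, rfl⟩)
      · rcases A9 k h3.symm with ⟨c2, rfl⟩ | rfl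
        · rcases h4 with h4 | h4 <;> simp only [r, L, Gd, R] at h4
          obtain ⟨-, rfl⟩ := h4
          exact hab rfl
        · exact hcd rfl
      · rcases A5 k h3.symm with ⟨x, rfl⟩ | (⟨hj0, rfl⟩ | ⟨j', hj', rfl⟩)
        · rcases h4 with h4 | h4 <;> simp only [r, L, Gd, R] at h4
        · omega
        · rcases h4 with h4 | h4 <;> simp only [r, L, Gd, R] at h4
          subst h4; exact hcd rfl
      · rcases A11 k h3.symm with ⟨s, rfl⟩ | (⟨hk0, rfl⟩ | ⟨j', hj', rfl⟩)
        · rcases h4 with h4 | h4 <;> simp only [r, L, Gd, R] at h4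
        · omega
        · rcases h4 with h4 | h4 <;> simp only [r, L, Gd, R] at h4
          subst h4; exact hcd rfl
      · rcases A9 k h3.symm with ⟨c2, rfl⟩ | rfl
        · rcases h4 with h4 | h4 <;> simp only [r, L, Gd, R] at h4
        · exact hcd rfl
      · have : j1 = j2 := Fin.ext (by omega)
        subst this
        exact hab rfl
      · rcases A11 k h3.symm with ⟨s, rfl⟩ | (⟨hk0, rfl⟩ | ⟨j', hj', rfl⟩)
        · rcases h4 with h4 | h4 <;> simp only [r, L, Gd, R] at h4
        · omega
        · rcases h4 with h4 | h4 <;> simp only [r, L, Gd, R] at h4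
          have : j' = i := Fin.ext (by omega)
          subst this
          exact hcd rfl
      · rcases A9 k h3.symm with ⟨c2, rfl⟩ | rfl
        · rcases h4 with h4 | h4 <;> simp only [r, L, Gd, R] at h4
        · exact hcd rfl
      · rcases A5 k h3.symm with ⟨x, rfl⟩ | (⟨hj0, rfl⟩ | ⟨j', hj', rfl⟩)
        · rcases h4 with h4 | h4 <;> simp only [r, L, Gd, R] at h4
        · omega
        · rcases h4 with h4 | h4 <;> simp only [r, L, Gd, R] at h4
          have : j' = i := Fin.ext (by omega)
          subst this
          exact hcd rfl
      · exact hab rfl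
  -- RIGHT END UNIT
  · cases c with
    | ap =>
      rcases A11 k h1 with ⟨s1, rfl⟩ | (⟨hk1, rfl⟩ | ⟨j1, hj1, rfl⟩) <;>
        rcases A11 k h2.symm with ⟨s2, rfl⟩ | (⟨hk2, rfl⟩ | ⟨j2, hj2, rfl⟩)
      · rcases A12 k h3.symm with rfl | ⟨c2, rfl⟩
        · exact hcd rfl
        · rcases h4 with h4 | h4 <;> simp only [r, L, Gd, R] at h4
          subst h4; exact hab rfl
      · rcases A4 k h3.symm with ⟨s', rfl⟩ | (⟨i', hi', rfl⟩ | ⟨hk0, rfl⟩)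
        · rcases h4 with h4 | h4 <;> simp only [r, L, Gd, R] at h4
        · rcases h4 with h4 | h4 <;> simp only [r, L, Gd, R] at h4
        · exact hcd rfl
      · rcases A10 k h3.symm with ⟨m, rfl⟩ | (⟨j', hj', rfl⟩ | ⟨hk0, rfl⟩)
        · rcases h4 with h4 | h4 <;> simp only [r, L, Gd, R] at h4
        · exact absurd j'.isLt (by omega)
        · exact hcd rfl
      · rcases A12 k h3.symm with rfl | ⟨c2, rfl⟩
        · exact hcd rfl
        · rcases h4 with h4 | h4 <;> simp only [r, L, Gd, R] at h4
      · exact hab rfl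
      · exact absurd j2.isLt (by omega)
      · rcases A12 k h3.symm with rfl | ⟨c2, rfl⟩
        · exact hcd rfl
        · rcases h4 with h4 | h4 <;> simp only [r, L, Gd, R] at h4
      · exact absurd j1.isLt (by omega)
      · have : j1 = j2 := Fin.ext (by omega)
        subst this
        exact hab rfl
    | sl s =>
      rcases A12 k h1 with rfl | ⟨c1, rfl⟩ <;> rcases A12 k h2.symm with rfl | ⟨c2, rfl⟩
      · exact hab rfl
      · rcases A13 k h3.symm with rfl | ⟨x, y, rfl, e3⟩
        · exact hcd rfl
        · rcases h4 with h4 | h4 <;> simp only [r, L, Gd, R] at h4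
      · rcases A11 k h3.symm with ⟨s2, rfl⟩ | (⟨hk0, rfl⟩ | ⟨j, hj, rfl⟩)
        · rcases h4 with h4 | h4 <;> simp only [r, L, Gd, R] at h4
          subst h4; exact hcd rfl
        · rcases h4 with h4 | h4 <;> simp only [r, L, Gd, R] at h4
        · rcases h4 with h4 | h4 <;> simp only [r, L, Gd, R] at h4
      · rcases A13 k h3.symm with rfl | ⟨x, y, rfl, e3⟩
        · exact hcd rfl
        · rcases h4 with h4 | h4 <;> simp only [r, L, Gd, R] at h4
          obtain rfl := sameSlope h4 e3; exact hab rfl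
    | ln s c0 =>
      rcases A13 k h1 with rfl | ⟨x1, y1, rfl, e1⟩ <;>
        rcases A13 k h2.symm with rfl | ⟨x2, y2, rfl, e2⟩
      · exact hab rfl
      · obtain ⟨s3, c3, rfl, e3⟩ := A14 k h3.symm
        rcases h4 with h4 | h4 <;> simp only [r, L, Gd, R] at h4
        subst h4
        obtain rfl := sameSlope e2 e3; exact hcd rfl
      · rcases A12 k h3.symm with rfl | ⟨c3, rfl⟩
        · rcases h4 with h4 | h4 <;> simp only [r, L, Gd, R] at h4
        · rcases h4 with h4 | h4 <;> simp only [r, L, Gd, R] at h4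
          obtain rfl := sameSlope e1 h4; exact hcd rfl
      · obtain ⟨s3, c3, rfl, e3⟩ := A14 k h3.symm
        rcases h4 with h4 | h4 <;> simp only [r, L, Gd, R] at h4
        rcases twoLinesO e1 h4 e2 e3 with ⟨rfl, rfl⟩ | ⟨rfl, rfl⟩
        · exact hcd rfl
        · exact hab rfl
    | pt x y =>
      obtain ⟨s1, c1, rfl, e1⟩ := A14 k h1
      obtain ⟨s2, c2, rfl, e2⟩ := A14 k h2.symm
      rcases A13 k h3.symm with rfl | ⟨x', y', rfl, e3⟩
      · rcases h4 with h4 | h4 <;> simp only [r, L, Gd, R] at h4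
        subst h4
        obtain rfl := sameSlope e1 e2; exact hab rfl
      · rcases h4 with h4 | h4 <;> simp only [r, L, Gd, R] at h4
        rcases twoLinesO e1 e2 h4 e3 with ⟨rfl, rfl⟩ | ⟨rfl, rfl⟩
        · exact hab rfl
        · exact hcd rfl


def CycleFree' {V : Type*} (G : SimpleGraph V) (m : ℕ) : Prop :=
  ∀ ⦃v : V⦄ (w : G.Walk v v), w.IsCycle → w.length ≠ m

def lam : V F k → ℕ
  | .inl (.pt _ _) => 0
  | .inl (.ln _ _) => 1
  | .inl (.sl _) => 2
  | .inl .ap => 3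
  | .inr (.inl (i, .ap1)) => 6*i.val+4
  | .inr (.inl (i, .vx _)) => 6*i.val+5
  | .inr (.inl (i, .pt _ _)) => 6*i.val+6
  | .inr (.inl (i, .ln _ _)) => 6*i.val+7
  | .inr (.inl (i, .sl _)) => 6*i.val+8
  | .inr (.inl (i, .ap2)) => 6*i.val+9
  | .inr (.inr .ap) => 6*k+4
  | .inr (.inr (.sl _)) => 6*k+5
  | .inr (.inr (.ln _ _)) => 6*k+6
  | .inr (.inr (.pt _ _)) => 6*k+7


def Gr (F : Type) [Field F] [Fintype F] (k : ℕ) : SimpleGraph (V F k) :=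
  SimpleGraph.fromRel (r k)

lemma adj_iff {u v : V F k} : (Gr F k).Adj u v ↔ u ≠ v ∧ AD k u v := by
  rw [Gr, SimpleGraph.fromRel_adj, AD]

lemma r_lam {u v : V F k} (h : r k u v) : lam k v = lam k u + 1 := by
  rcases u with (u | ⟨⟨i, u⟩ | u⟩) <;> rcases v with (v | ⟨⟨j, v⟩ | v⟩) <;>
    cases u <;> cases v <;> simp_all [r, lam, Fin.ext_iff] <;> omega

lemma adj_lam {u v : V F k} (h : (Gr F k).Adj u v) :
    lam k v = lam k u + 1 ∨ lam k u = lam k v + 1 := by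
  rcases (adj_iff k).1 h with ⟨-, h | h⟩
  · exact Or.inl (r_lam k h)
  · exact Or.inr (r_lam k h)

lemma colorable : (Gr F k).Colorable 2 := by
  refine ⟨SimpleGraph.Coloring.mk (fun v => ⟨lam k v % 2, Nat.mod_lt _ (by norm_num)⟩) ?_⟩
  intro u v huv
  rcases adj_lam k huv with h | h <;> simp only [ne_eq, Fin.mk.injEq] <;> omega

lemma c4free : CycleFree' (Gr F k) 4 := by
  intro v w hw hlen
  cases w with
  | nil => simp at hlen
  | cons h1 w =>
  cases w with
  | nil => simp at hlen
  | cons h2 w =>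
  cases w with
  | nil => simp at hlen
  | cons h3 w =>
  cases w with
  | nil => simp at hlen
  | cons h4 w =>
  cases w with
  | cons h5 w => simp [SimpleGraph.Walk.length_cons] at hlen
  | nil =>
    have hs := hw.support_nodup
    simp [SimpleGraph.Walk.support_cons] at hs
    obtain ⟨⟨hbc, hbd, hbv⟩, ⟨hcd', hcv⟩, hdv⟩ := hs
    have a1 := (adj_iff k).1 h1
    have a2 := (adj_iff k).1 h2
    have a3 := (adj_iff k).1 h3
    have a4 := (adj_iff k).1 h4
    exact master k (fun h => hcv (h.symm)) hbd a1.2 a2.2 a3.2 a4.2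


def evE : EV F ≃ ((F × F) ⊕ ((Option F × F) ⊕ (Option F ⊕ Unit))) where
  toFun v := match v with
    | .pt x y => .inl (x, y)
    | .ln s c => .inr (.inl (s, c))
    | .sl s => .inr (.inr (.inl s))
    | .ap => .inr (.inr (.inr ()))
  invFun v := match v with
    | .inl (x, y) => .pt x y
    | .inr (.inl (s, c)) => .ln s c
    | .inr (.inr (.inl s)) => .sl s
    | .inr (.inr (.inr _)) => .ap
  left_inv v := by cases v <;> rfl
  right_inv v := by rcases v with ⟨x, y⟩ | (⟨s, c⟩ | (s | ⟨⟩)) <;> rfl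

def gvE : GV F ≃ (Unit ⊕ (F ⊕ ((F × F) ⊕ ((F × F) ⊕ (F ⊕ Unit))))) where
  toFun v := match v with
    | .ap1 => .inl ()
    | .vx x => .inr (.inl x)
    | .pt x y => .inr (.inr (.inl (x, y)))
    | .ln m c => .inr (.inr (.inr (.inl (m, c))))
    | .sl m => .inr (.inr (.inr (.inr (.inl m))))
    | .ap2 => .inr (.inr (.inr (.inr (.inr ()))))
  invFun v := match v with
    | .inl _ => .ap1
    | .inr (.inl x) => .vx x
    | .inr (.inr (.inl (x, y))) => .pt x y
    | .inr (.inr (.inr (.inl (m, c)))) => .ln m c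
    | .inr (.inr (.inr (.inr (.inl m)))) => .sl m
    | .inr (.inr (.inr (.inr (.inr _)))) => .ap2
  left_inv v := by cases v <;> rfl
  right_inv v := by rcases v with ⟨⟩ | (x | (⟨x, y⟩ | (⟨m, c⟩ | (m | ⟨⟩)))) <;> rfl

noncomputable instance : Fintype (EV F) := Fintype.ofEquiv _ (evE (F := F)).symm
noncomputable instance : Fintype (GV F) := Fintype.ofEquiv _ (gvE (F := F)).symm

lemma card_EV : Fintype.card (EV F) = 2 * Fintype.card F ^ 2 + 2 * Fintype.card F + 2 := by
  rw [Fintype.card_congr (evE (F := F))]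
  simp [Fintype.card_sum, Fintype.card_prod, Fintype.card_option]
  ring

lemma card_GV : Fintype.card (GV F) = 2 * Fintype.card F ^ 2 + 2 * Fintype.card F + 2 := by
  rw [Fintype.card_congr (gvE (F := F))]
  simp [Fintype.card_sum, Fintype.card_prod, Fintype.card_option]
  ring

lemma card_V : Fintype.card (V F k) = (k + 2) * (2 * Fintype.card F ^ 2 + 2 * Fintype.card F + 2) := by
  simp [Fintype.card_sum, Fintype.card_prod, card_EV, card_GV]
  ring

lemma walk_lam {u v : V F k} (w : (Gr F k).Walk u v) :
    lam k v ≤ lam k u + w.length ∧ lam k u ≤ lam k v + w.length := by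
  induction w with
  | nil => simp
  | cons h p ih =>
    obtain ⟨ih1, ih2⟩ := ih
    rcases adj_lam k h with h' | h' <;> simp only [SimpleGraph.Walk.length_cons] <;> omega


lemma adjr {u v : V F k} (h : r k u v) (hne : u ≠ v) : (Gr F k).Adj u v :=
  (adj_iff k).2 ⟨hne, Or.inl h⟩

lemma adjr' {u v : V F k} (h : r k v u) (hne : u ≠ v) : (Gr F k).Adj u v :=
  (adj_iff k).2 ⟨hne, Or.inr h⟩

lemma nbr_card_ge {v : V F k} (f : Option F → V F k) (hinj : Function.Injective f)
    (hadj : ∀ s, (Gr F k).Adj v (f s)) :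
    Fintype.card F + 1 ≤ ((Gr F k).neighborSet v).ncard := by
  have hsub : Set.range f ⊆ (Gr F k).neighborSet v := by
    rintro _ ⟨s, rfl⟩; exact hadj s
  have h2 := Set.ncard_le_ncard hsub (Set.toFinite _)
  rwa [← Nat.card_coe_set_eq, Nat.card_range_of_injective hinj, Nat.card_eq_fintype_card,
    Fintype.card_option] at h2

def lc (s : Option F) (x y : F) : F :=
  match s with
  | some m => y - m*x
  | none => x

lemma onL_lc (s : Option F) (x y : F) : onL s (lc s x y) x y := by
  cases s <;> simp [onL, lc]

lemma min_deg (v : V F k) : Fintype.card F + 1 ≤ ((Gr F k).neighborSet v).ncard := by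
  rcases v with (v | ⟨⟨i, g⟩ | v⟩)
  · cases v with
    | pt x y =>
      apply nbr_card_ge k (fun s => L (.ln s (lc s x y)))
      · intro a b hab
        simp only [L, Sum.inl.injEq, EV.ln.injEq] at hab
        exact hab.1
      · intro s
        exact adjr k (by simpa [r, L] using onL_lc s x y) (by simp [L])
    | ln s c =>
      cases s with
      | some m =>
        apply nbr_card_ge k
          (fun o => match o with | none => L (.sl (some m)) | some t => L (.pt t (m*t+c)))
        · intro a b hab
          cases a <;> cases b <;> simp_all [L]
        · intro o
          cases o with
          | none => exact adjr k (by simp [r, L]) (by simp [L])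
          | some t => exact adjr' k (by simp [r, L, onL]) (by simp [L])
      | none =>
        apply nbr_card_ge k
          (fun o => match o with | none => L (.sl none) | some t => L (.pt c t))
        · intro a b hab
          cases a <;> cases b <;> simp_all [L]
        · intro o
          cases o with
          | none => exact adjr k (by simp [r, L]) (by simp [L])
          | some t => exact adjr' k (by simp [r, L, onL]) (by simp [L])
    | sl s =>
      apply nbr_card_ge k (fun o => match o with | none => L .ap | some c => L (.ln s c))
      · intro a b hab
        cases a <;> cases b <;> simp_all [L]
      · intro o
        cases o with
        | none => exact adjr k (by simp [r, L]) (by simp [L])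
        | some c => exact adjr' k (by simp [r, L]) (by simp [L])
    | ap =>
      apply nbr_card_ge k (fun s => L (.sl s))
      · intro a b hab
        simp_all [L]
      · intro s
        exact adjr' k (by simp [r, L]) (by simp [L])
  · cases g with
    | ap1 =>
      apply nbr_card_ge k (fun o => match o with
        | some x => Gd i (.vx x)
        | none =>
          if h0 : i.val = 0 then (L .ap : V F k) else Gd ⟨i.val - 1, by omega⟩ .ap2)
      · intro a b hab
        cases a <;> cases b <;> split_ifs at hab <;> simp_all [L, Gd]
      · intro o
        cases o with
        | some x => exact adjr k (by simp [r, Gd]) (by simp [Gd])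
        | none =>
          by_cases h0 : i.val = 0
          · simp only [dif_pos h0]
            exact adjr' k (by simpa [r, L, Gd] using h0) (by simp [L, Gd])
          · simp only [dif_neg h0]
            exact adjr' k (by simp [r, Gd]; omega) (by simp [Gd])
    | vx x =>
      apply nbr_card_ge k (fun o => match o with
        | none => Gd i .ap1 | some y => Gd i (.pt x y))
      · intro a b hab
        cases a <;> cases b <;> simp_all [Gd]
      · intro o
        cases o with
        | none => exact adjr' k (by simp [r, Gd]) (by simp [Gd])
        | some y => exact adjr k (by simp [r, Gd]) (by simp [Gd])
    | pt x y =>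
      apply nbr_card_ge k (fun o => match o with
        | none => Gd i (.vx x) | some m => Gd i (.ln m (y - m*x)))
      · intro a b hab
        cases a <;> cases b <;> simp_all [Gd]
      · intro o
        cases o with
        | none => exact adjr' k (by simp [r, Gd]) (by simp [Gd])
        | some m => exact adjr k (by simp [r, Gd]) (by simp [Gd])
    | ln m c =>
      apply nbr_card_ge k (fun o => match o with
        | none => Gd i (.sl m) | some x => Gd i (.pt x (m*x+c)))
      · intro a b hab
        cases a <;> cases b <;> simp_all [Gd]
      · intro o
        cases o with
        | none => exact adjr k (by simp [r, Gd]) (by simp [Gd])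
        | some x => exact adjr' k (by simp [r, Gd]) (by simp [Gd])
    | sl m =>
      apply nbr_card_ge k (fun o => match o with
        | none => Gd i .ap2 | some c => Gd i (.ln m c))
      · intro a b hab
        cases a <;> cases b <;> simp_all [Gd]
      · intro o
        cases o with
        | none => exact adjr k (by simp [r, Gd]) (by simp [Gd])
        | some c => exact adjr' k (by simp [r, Gd]) (by simp [Gd])
    | ap2 =>
      apply nbr_card_ge k (fun o => match o with
        | some m => Gd i (.sl m)
        | none =>
          if h0 : i.val + 1 = k then (R .ap : V F k) else Gd ⟨i.val + 1, by omega⟩ .ap1)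
      · intro a b hab
        cases a <;> cases b <;> split_ifs at hab <;> simp_all [R, Gd]
      · intro o
        cases o with
        | some m => exact adjr' k (by simp [r, Gd]) (by simp [Gd])
        | none =>
          by_cases h0 : i.val + 1 = k
          · simp only [dif_pos h0]
            exact adjr k (by simpa [r, R, Gd] using h0) (by simp [R, Gd])
          · simp only [dif_neg h0]
            exact adjr k (by simp [r, Gd]) (by simp [Gd])
  · cases v with
    | ap =>
      apply nbr_card_ge k (fun s => R (.sl s))
      · intro a b hab
        simp_all [R]
      · intro s
        exact adjr k (by simp [r, R]) (by simp [R])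
    | sl s =>
      apply nbr_card_ge k (fun o => match o with
        | none => R .ap | some c => R (.ln s c))
      · intro a b hab
        cases a <;> cases b <;> simp_all [R]
      · intro o
        cases o with
        | none => exact adjr' k (by simp [r, R]) (by simp [R])
        | some c => exact adjr k (by simp [r, R]) (by simp [R])
    | ln s c =>
      cases s with
      | some m =>
        apply nbr_card_ge k (fun o => match o with
          | none => R (.sl (some m)) | some t => R (.pt t (m*t+c)))
        · intro a b hab
          cases a <;> cases b <;> simp_all [R]
        · intro o
          cases o with
          | none => exact adjr' k (by simp [r, R]) (by simp [R])
          | some t => exact adjr k (by simp [r, R, onL]) (by simp [R])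
      | none =>
        apply nbr_card_ge k (fun o => match o with
          | none => R (.sl none) | some t => R (.pt c t))
        · intro a b hab
          cases a <;> cases b <;> simp_all [R]
        · intro o
          cases o with
          | none => exact adjr' k (by simp [r, R]) (by simp [R])
          | some t => exact adjr k (by simp [r, R, onL]) (by simp [R])
    | pt x y =>
      apply nbr_card_ge k (fun s => R (.ln s (lc s x y)))
      · intro a b hab
        simp only [R, Sum.inr.injEq, EV.ln.injEq] at hab
        exact hab.1
      · intro s
        exact adjr' k (by simpa [r, R] using onL_lc s x y) (by simp [R])

lemma deg_exact :
    ((Gr F k).neighborSet (L (.pt 0 0))).ncard = Fintype.card F + 1 := by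
  have hset : (Gr F k).neighborSet (L (.pt 0 0)) =
      Set.range (fun s : Option F => (L (.ln s 0) : V F k)) := by
    ext w
    constructor
    · intro hw
      have had : AD k w (L (.pt 0 0)) := ((adj_iff k).1 hw).2.symm
      obtain ⟨s, c, rfl, hc⟩ := A1 k had
      have hc0 : c = 0 := by cases s <;> simp [onL] at hc <;> simp [hc]
      exact ⟨s, by rw [hc0]⟩
    · rintro ⟨s, rfl⟩
      exact adjr k (by cases s <;> simp [r, L, onL]) (by simp [L])
  rw [hset, ← Nat.card_coe_set_eq, Nat.card_range_of_injective, Nat.card_eq_fintype_card,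
    Fintype.card_option]
  intro a b hab
  simp_all [L]


lemma reach_ap1 : ∀ (n : ℕ) (hn : n < k), (Gr F k).Reachable (L .ap) (Gd ⟨n, hn⟩ .ap1) := by
  intro n
  induction n with
  | zero =>
    intro hn
    exact (adjr k (show r k (L .ap) (Gd ⟨0, hn⟩ .ap1) by simp [r, L, Gd, R]) (by simp [L, Gd])).reachable
  | succ n ih =>
    intro hn
    have h1 : n < k := by omega
    refine (ih h1).trans ?_
    have e1 := (adjr k (show r k (Gd ⟨n, h1⟩ .ap1) (Gd ⟨n, h1⟩ (.vx (0:F))) by simp [r, L, Gd, R])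
      (by simp [Gd])).reachable
    have e2 := (adjr k (show r k (Gd ⟨n, h1⟩ (.vx (0:F))) (Gd ⟨n, h1⟩ (.pt (0:F) 0)) by simp [r, L, Gd, R])
      (by simp [Gd])).reachable
    have e3 := (adjr k (show r k (Gd ⟨n, h1⟩ (.pt (0:F) 0)) (Gd ⟨n, h1⟩ (.ln (0:F) 0)) by simp [r, L, Gd, R])
      (by simp [Gd])).reachable
    have e4 := (adjr k (show r k (Gd ⟨n, h1⟩ (.ln (0:F) 0)) (Gd ⟨n, h1⟩ (.sl (0:F))) by simp [r, L, Gd, R])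
      (by simp [Gd])).reachable
    have e5 := (adjr k (show r k (Gd ⟨n, h1⟩ (.sl (0:F))) (Gd ⟨n, h1⟩ .ap2) by simp [r, L, Gd, R])
      (by simp [Gd])).reachable
    have e6 := (adjr k (show r k (Gd (F := F) ⟨n, h1⟩ .ap2) (Gd (F := F) ⟨n+1, hn⟩ .ap1) by simp [r, L, Gd, R])
      (by simp [Gd])).reachable
    exact e1.trans (e2.trans (e3.trans (e4.trans (e5.trans e6))))

lemma reach_gd (n : ℕ) (hn : n < k) (g : GV F) :
    (Gr F k).Reachable (L .ap) (Gd ⟨n, hn⟩ g) := by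
  have base := reach_ap1 (F := F) k n hn
  set i : Fin k := ⟨n, hn⟩
  have hvx : ∀ x : F, (Gr F k).Reachable (L .ap) (Gd i (.vx x)) := fun x =>
    base.trans (adjr k (show r k (Gd i .ap1) (Gd i (.vx x)) by simp [r, L, Gd, R])
      (by simp [Gd])).reachable
  have hpt : ∀ x y : F, (Gr F k).Reachable (L .ap) (Gd i (.pt x y)) := fun x y =>
    (hvx x).trans (adjr k (show r k (Gd i (.vx x)) (Gd i (.pt x y)) by simp [r, L, Gd, R])
      (by simp [Gd])).reachable
  have hln : ∀ m c : F, (Gr F k).Reachable (L .ap) (Gd i (.ln m c)) := fun m c =>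
    (hpt (0:F) (m*0+c)).trans (adjr k
      (show r k (Gd i (.pt (0:F) (m*0+c))) (Gd i (.ln m c)) by simp [r, L, Gd, R]) (by simp [Gd])).reachable
  have hsl : ∀ m : F, (Gr F k).Reachable (L .ap) (Gd i (.sl m)) := fun m =>
    (hln m 0).trans (adjr k (show r k (Gd i (.ln m (0:F))) (Gd i (.sl m)) by simp [r, L, Gd, R])
      (by simp [Gd])).reachable
  cases g with
  | ap1 => exact base
  | vx x => exact hvx x
  | pt x y => exact hpt x y
  | ln m c => exact hln m c
  | sl m => exact hsl m
  | ap2 => exact (hsl 0).trans (adjr k (show r k (Gd i (.sl (0:F))) (Gd i .ap2) by simp [r, L, Gd, R])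
      (by simp [Gd])).reachable

lemma reach_anchor (v : V F k) : (Gr F k).Reachable (L .ap) v := by
  have hRap : (Gr F k).Reachable (L .ap) (R .ap) := by
    by_cases h0 : k = 0
    · exact (adjr k (show r k (L .ap) (R .ap) by simpa [r, L, Gd, R] using h0)
        (by simp [L, R])).reachable
    · have hk1 : k - 1 < k := by omega
      exact (reach_gd k (k-1) hk1 .ap2).trans
        (adjr k (show r k (Gd ⟨k-1, hk1⟩ .ap2) (R .ap) by simp [r, L, Gd, R]; omega)
          (by simp [Gd, R])).reachable
  have hRsl : ∀ s, (Gr F k).Reachable (L .ap) (R (.sl s)) := fun s =>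
    hRap.trans (adjr k (show r k (R .ap) (R (.sl s)) by simp [r, L, Gd, R]) (by simp [R])).reachable
  have hRln : ∀ s c, (Gr F k).Reachable (L .ap) (R (.ln s c)) := fun s c =>
    (hRsl s).trans (adjr k (show r k (R (.sl s)) (R (.ln s c)) by simp [r, L, Gd, R])
      (by simp [R])).reachable
  rcases v with (v | ⟨⟨⟨n, hn⟩, g⟩ | v⟩)
  · cases v with
    | pt x y =>
      have w1 := (adjr k (show r k (L (.pt x y)) (L (.ln none x)) by simp [r, L, Gd, R, onL])
        (by simp [L])).reachable
      have w2 := (adjr k (show r k (L (.ln none x)) (L (.sl none)) by simp [r, L, Gd, R])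
        (by simp [L])).reachable
      have w3 := (adjr k (show r k (L (.sl (none : Option F))) (L (F := F) .ap) by simp [r, L, Gd, R])
        (by simp [L])).reachable
      exact ((w1.trans w2).trans w3).symm
    | ln s c =>
      have w2 := (adjr k (show r k (L (.ln s c)) (L (.sl s)) by simp [r, L, Gd, R])
        (by simp [L])).reachable
      have w3 := (adjr k (show r k (L (.sl s)) (L .ap) by simp [r, L, Gd, R])
        (by simp [L])).reachable
      exact (w2.trans w3).symm
    | sl s =>
      exact ((adjr k (show r k (L (.sl s)) (L .ap) by simp [r, L, Gd, R]) (by simp [L])).reachable).symm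
    | ap => exact SimpleGraph.Reachable.refl _
  · exact reach_gd k n hn g
  · cases v with
    | ap => exact hRap
    | sl s => exact hRsl s
    | ln s c => exact hRln s c
    | pt x y =>
      exact (hRln none x).trans (adjr k
        (show r k (R (.ln none x)) (R (.pt x y)) by simp [r, L, Gd, R, onL]) (by simp [R])).reachable

lemma conn : (Gr F k).Connected := by
  rw [SimpleGraph.connected_iff]
  exact ⟨fun u v => (reach_anchor k u).symm.trans (reach_anchor k v), ⟨L .ap⟩⟩


noncomputable def eccent' {W : Type*} (G : SimpleGraph W) (v : W) : ℕ :=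
  sSup (Set.range (G.dist v))

lemma dist_lam (u v : V F k) :
    lam k u ≤ lam k v + (Gr F k).dist u v ∧ lam k v ≤ lam k u + (Gr F k).dist u v := by
  obtain ⟨w, hw⟩ := ((conn k).preconnected u v).exists_walk_length_eq_dist
  have h := walk_lam k w
  rw [hw] at h
  exact ⟨h.2, h.1⟩

lemma ecc_ge_dist (v x : V F k) : (Gr F k).dist v x ≤ eccent' (Gr F k) v :=
  le_csSup (Set.finite_range _).bddAbove ⟨x, rfl⟩

lemma ecc_lb (v : V F k) :
    lam k v ≤ eccent' (Gr F k) v ∧ 6*k+7 ≤ lam k v + eccent' (Gr F k) v := by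
  constructor
  · have h := (dist_lam k v (L (.pt (0:F) 0))).1
    have h2 := ecc_ge_dist k v (L (.pt (0:F) 0))
    have hl : lam k (L (.pt (0:F) 0) : V F k) = 0 := rfl
    rw [hl] at h
    omega
  · have h := (dist_lam k v (R (.pt (0:F) 0))).2
    have h2 := ecc_ge_dist k v (R (.pt (0:F) 0))
    have hl : lam k (R (.pt (0:F) 0) : V F k) = 6*k+7 := rfl
    rw [hl] at h
    omega

def cB : V F k → ℕ
  | .inl _ => 6*k+4
  | .inr (.inl (i, _)) => max (6*i.val+4) (6*(k-i.val)-2)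
  | .inr (.inr _) => 6*k+4

lemma cB_le_ecc (v : V F k) : cB k v ≤ eccent' (Gr F k) v := by
  obtain ⟨h1, h2⟩ := ecc_lb k v
  rcases v with (v | ⟨⟨i, g⟩ | v⟩)
  · cases v <;> simp only [cB, lam] at h1 h2 ⊢ <;> omega
  · have hik := i.isLt
    cases g <;> simp only [cB, lam] at h1 h2 ⊢ <;> omega
  · cases v <;> simp only [cB, lam] at h1 h2 ⊢ <;> omega

lemma sum_cB :
    (∑ v : V F k, cB k v) = (2*Fintype.card F^2+2*Fintype.card F+2) *
      (2*(6*k+4) + ∑ i ∈ Finset.range k, max (6*i+4) (6*(k-i)-2)) := by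
  rw [Fintype.sum_sum_type, Fintype.sum_sum_type, Fintype.sum_prod_type]
  simp only [cB, Finset.sum_const, Finset.card_univ, card_EV, card_GV, smul_eq_mul]
  rw [← Finset.mul_sum, Fin.sum_univ_eq_sum_range (fun i => max (6*i+4) (6*(k-i)-2)) k]
  ring

lemma sum_max (m : ℕ) :
    2*(2*(6*(2*m)+4) + ∑ i ∈ Finset.range (2*m), max (6*i+4) (6*(2*m-i)-2)) =
      (2*m+2)*(9*(2*m)+8) := by
  have hs : (∑ i ∈ Finset.range (2*m), max (6*i+4) (6*(2*m-i)-2)) = 18*m^2+2*m := by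
    rw [Finset.range_eq_Ico, ← Finset.sum_Ico_consecutive _ (Nat.zero_le m) (by omega : m ≤ 2*m)]
    have h1 : (∑ i ∈ Finset.Ico 0 m, max (6*i+4) (6*(2*m-i)-2)) =
        ∑ i ∈ Finset.range m, (6*(m-1-i) + (6*m+4)) := by
      rw [← Finset.range_eq_Ico]
      refine Finset.sum_congr rfl fun i hi => ?_
      have hi' : i < m := Finset.mem_range.1 hi
      omega
    have h2 : (∑ i ∈ Finset.Ico m (2*m), max (6*i+4) (6*(2*m-i)-2)) =
        ∑ i ∈ Finset.range m, (6*i + (6*m+4)) := by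
      rw [Finset.sum_Ico_eq_sum_range]
      have hmm : 2*m - m = m := by omega
      rw [hmm]
      refine Finset.sum_congr rfl fun i hi => ?_
      have hi' : i < m := Finset.mem_range.1 hi
      omega
    rw [h1, h2, Finset.sum_range_reflect (fun i => 6*i + (6*m+4)) m]
    rw [Finset.sum_add_distrib, Finset.sum_const, Finset.card_range, ← Finset.mul_sum]
    simp only [smul_eq_mul]
    cases m with
    | zero => simp
    | succ m' =>
      have hA := Finset.sum_range_id_mul_two (m'+1)
      simp only [Nat.add_sub_cancel] at hA
      nlinarith [hA]
  rw [hs]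
  ring

lemma sum_ecc_ge (m : ℕ) (hk : k = 2*m) :
    (9*k+8) * Fintype.card (V F k) ≤ 2 * ∑ v : V F k, eccent' (Gr F k) v := by
  have h1 : (∑ v : V F k, cB k v) ≤ ∑ v : V F k, eccent' (Gr F k) v :=
    Finset.sum_le_sum fun v _ => cB_le_ecc k v
  have h2 := sum_cB (F := F) k
  have h3 := sum_max m
  rw [← hk] at h3
  rw [card_V]
  calc (9*k+8) * ((k+2)*(2*Fintype.card F^2+2*Fintype.card F+2))
      = (2*Fintype.card F^2+2*Fintype.card F+2) * ((k+2)*(9*k+8)) := by ring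
    _ = (2*Fintype.card F^2+2*Fintype.card F+2) *
        (2*(2*(6*k+4) + ∑ i ∈ Finset.range k, max (6*i+4) (6*(k-i)-2))) := by rw [← h3]
    _ = 2 * ((2*Fintype.card F^2+2*Fintype.card F+2) *
        (2*(6*k+4) + ∑ i ∈ Finset.range k, max (6*i+4) (6*(k-i)-2))) := by ring
    _ = 2 * (∑ v : V F k, cB k v) := by rw [h2]
    _ ≤ 2 * ∑ v : V F k, eccent' (Gr F k) v := by omega


lemma c4free' : CycleFree (Gr F k) 4 := c4free k

end C4C

theorem stmt_8 (δ : ℕ) (hq : IsPrimePow (δ - 1)) (ℓ : ℕ) (hl2 : 2 ≤ ℓ) (hle : Even ℓ) :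
    ∃ (V : Type) (G : SimpleGraph V), Finite V ∧ G.Connected ∧ G.Colorable 2 ∧
      CycleFree G 4 ∧
      (∀ v : V, δ ≤ (G.neighborSet v).ncard) ∧ (∃ v : V, (G.neighborSet v).ncard = δ) ∧
      Nat.card V = ℓ * (2 * δ ^ 2 - 2 * δ + 2) ∧
      9 * (Nat.card V : ℝ) / (2 * ((2 * δ ^ 2 - 2 * δ + 2 : ℕ) : ℝ)) - 5 ≤ avec G := by
  obtain ⟨p, e, hp, he, hpe⟩ := hq
  haveI : Fact p.Prime := ⟨Nat.prime_iff.2 hp⟩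
  set F := GaloisField p e with hF
  haveI : Fintype F := Fintype.ofFinite F
  have hcard : Fintype.card F = p ^ e := by
    rw [← Nat.card_eq_fintype_card]
    exact GaloisField.card p e (by omega)
  have hq2 : 2 ≤ δ - 1 := by
    have ha : 2 ≤ p := (Nat.prime_iff.2 hp).two_le
    have hb : p ≤ p ^ e := Nat.le_self_pow (by omega) p
    omega
  have hδ3 : 3 ≤ δ := by omega
  have hqδ : Fintype.card F = δ - 1 := by rw [hcard, hpe]
  set q := Fintype.card F with hqdef
  have hδq : δ = q + 1 := by omega
  set k := ℓ - 2 with hk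
  have hℓ : ℓ = k + 2 := by omega
  obtain ⟨m, hm⟩ := hle
  have hkm : k = 2 * (m - 1) := by omega
  have h2 : 2 * δ ^ 2 - 2 * δ + 2 = 2 * q ^ 2 + 2 * q + 2 := by
    rw [hδq]
    have : (q + 1) ^ 2 = q ^ 2 + 2 * q + 1 := by ring
    omega
  refine ⟨C4C.V F k, C4C.Gr F k, inferInstance, C4C.conn k, C4C.colorable k, C4C.c4free' k,
    ?_, ?_, ?_, ?_⟩
  · intro v
    have h := C4C.min_deg k v
    omega
  · refine ⟨C4C.L (.pt 0 0), ?_⟩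
    rw [C4C.deg_exact k]
    omega
  · rw [Nat.card_eq_fintype_card, C4C.card_V, h2, hℓ, Nat.mul_comm]
  · have hT := C4C.sum_ecc_ge (F := F) k (m - 1) hkm
    have hNP := C4C.card_V (F := F) k
    set T : ℕ := ∑ v : C4C.V F k, eccent (C4C.Gr F k) v with hTdef
    have hT' : (9 * k + 8) * Fintype.card (C4C.V F k) ≤ 2 * T := hT
    rw [avec, finsum_eq_sum_of_fintype, Nat.card_eq_fintype_card]
    have hsum : (∑ v : C4C.V F k, (eccent (C4C.Gr F k) v : ℝ)) = (T : ℝ) := by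
      rw [hTdef]
      push_cast
      rfl
    rw [hsum, h2]
    haveI : Nonempty (C4C.V F k) := ⟨C4C.L .ap⟩
    have hP : (0:ℝ) < ((2 * q ^ 2 + 2 * q + 2 : ℕ) : ℝ) := by positivity
    have hN : (0:ℝ) < (Fintype.card (C4C.V F k) : ℝ) := by
      have h0 : 0 < Fintype.card (C4C.V F k) := Fintype.card_pos
      exact_mod_cast h0
    have key : ((9 * k + 8 : ℕ) : ℝ) * (Fintype.card (C4C.V F k) : ℝ) ≤ 2 * (T : ℝ) := by
      exact_mod_cast hT'
    have hNPr : ((Fintype.card (C4C.V F k) : ℕ) : ℝ) =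
        ((k : ℝ) + 2) * ((2 * q ^ 2 + 2 * q + 2 : ℕ) : ℝ) := by
      rw [hNP]
      push_cast
      ring
    have e1 : 9 * ((Fintype.card (C4C.V F k) : ℕ) : ℝ) /
        (2 * ((2 * q ^ 2 + 2 * q + 2 : ℕ) : ℝ)) = 9 * ((k : ℝ) + 2) / 2 := by
      rw [hNPr]
      field_simp
    have e2 : ((9 * (k:ℝ) + 8)) / 2 ≤ (T : ℝ) / (Fintype.card (C4C.V F k) : ℝ) := by
      rw [div_le_div_iff₀ (by norm_num) hN]
      push_cast at key
      nlinarith [key]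
    rw [e1]
    linarith [e2]
end

section
/- Let δ, k ∈ ℕ with δ − 1 = q a prime power and k ≥ 7. Then there exists a connected bipartite C₄-free graph of minimum degree δ and maximum degree Δ = (q^k − 1)(q^{k−1} − 1)/((q² − 1)(q² − q)) − 1/q, whose order n satisfies Δ* ≤ n ≤ Δ* + 2√(Δ(δ−2)) + 1/2, where Δ* = Δδ + (δ−1)·√(Δ(δ−2)) + 3/2. -/
open SimpleGraph

/-!
Let `F = 𝔽_q`. Take the affine spaces `F², …, F^(k-1)` and, in each, split every parallel class
of lines into blocks of `q` lines. The graph has a root joined to every block, each block joined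
to its `q` lines and each line joined to its `q` points. Blocks and lines have degree
`q + 1 = δ`, a point of `F^n` lies on `(q^n - 1)/(q - 1)` lines, and the root has the largest
degree `Δ`, the number of blocks. Edges only join consecutive layers, so the graph is bipartite,
and it has no `C₄` because the lines of a block are disjoint and two points span at most one
line. Counting blocks and points with geometric sums gives the closed form of `Δ` and the order
`1 + (q + 1) Δ + ∑ q^n`; the two bounds on the order then reduce to polynomial inequalities in
`q` and `q^(k-2)`.
-/

open scoped LinearAlgebra.Projectivization
open Module Finset

theorem cycleFree_four_of_commonNeighbors_subsingleton {V : Type*} {G : SimpleGraph V}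
    (h : ∀ ⦃x y⦄, x ≠ y → (G.commonNeighbors x y).Subsingleton) : CycleFree G 4 := by
  rintro a (_ | ⟨hab, _ | ⟨hbc, _ | ⟨hcd, _ | ⟨hda, _ | ⟨_, _⟩⟩⟩⟩⟩) hw hlen <;>
    simp only [Walk.length_cons, Walk.length_nil] at hlen <;> try omega
  have hnd := hw.support_nodup
  simp only [Walk.support_cons, Walk.support_nil, List.tail_cons, List.nodup_cons,
    List.mem_cons, List.not_mem_nil, or_false, not_or] at hnd
  -- the cycle `a b c d` makes `b ≠ d` two common neighbours of `a ≠ c`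
  exact hnd.1.2.1 (h (Ne.symm hnd.2.1.2) ⟨hab, hbc.symm⟩ ⟨hda.symm, hcd⟩)

theorem Sigma.setOf_map_id_eq {ι : Type*} {α β : ι → Type*} (f : ∀ i, α i → β i)
    (i : ι) (b : β i) : {x | Sigma.map id f x = ⟨i, b⟩} = Sigma.mk i '' {a | f i a = b} := by
  ext ⟨j, a⟩
  simp only [Set.mem_ofPred_eq, Sigma.map, id, Set.mem_image, Sigma.mk.injEq]
  constructor
  · rintro ⟨rfl, h⟩
    exact ⟨a, eq_of_heq h, rfl, .rfl⟩
  · rintro ⟨a, rfl, rfl, h⟩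
    obtain rfl := eq_of_heq h
    exact ⟨rfl, .rfl⟩

theorem Sigma.ncard_setOf_map_id_eq {ι : Type*} {α β : ι → Type*} (f : ∀ i, α i → β i)
    (i : ι) (b : β i) : {x | Sigma.map id f x = ⟨i, b⟩}.ncard = {a | f i a = b}.ncard := by
  rw [Sigma.setOf_map_id_eq, Set.ncard_image_of_injective _ sigma_mk_injective]

section TowerGraph

variable {U L P : Type*} (parent : L → U) (Inc : L → P → Prop)

/-- `inl ()` is the root, and `U`, `L`, `P` are the blocks, lines and points. -/
def towerRel : Unit ⊕ U ⊕ L ⊕ P → Unit ⊕ U ⊕ L ⊕ P → Prop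
  | .inl _, .inr (.inl _) => True
  | .inr (.inl u), .inr (.inr (.inl l)) => parent l = u
  | .inr (.inr (.inl l)), .inr (.inr (.inr p)) => Inc l p
  | _, _ => False

def towerGraph : SimpleGraph (Unit ⊕ U ⊕ L ⊕ P) := fromRel (towerRel parent Inc)

def HasDisjointBlocks : Prop :=
  ∀ ⦃l l' p⦄, parent l = parent l' → Inc l p → Inc l' p → l = l'

def IsPartialLinear : Prop :=
  ∀ ⦃l l' p p'⦄, p ≠ p' → Inc l p → Inc l p' → Inc l' p → Inc l' p' → l = l'

theorem towerGraph_ncard_neighborSet_root :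
    ((towerGraph parent Inc).neighborSet (.inl ())).ncard = Nat.card U := by
  have : (towerGraph parent Inc).neighborSet (.inl ()) = Set.range (Sum.inr ∘ Sum.inl) := by
    ext (_ | _ | _ | _) <;> simp [towerGraph, towerRel]
  rw [this, Set.ncard_range_of_injective (Sum.inr_injective.comp Sum.inl_injective)]

theorem towerGraph_ncard_neighborSet_block [Finite L] (u : U) :
    ((towerGraph parent Inc).neighborSet (.inr (.inl u))).ncard =
      {l | parent l = u}.ncard + 1 := by
  have : (towerGraph parent Inc).neighborSet (.inr (.inl u)) =
      insert (.inl ()) ((Sum.inr ∘ Sum.inr ∘ Sum.inl) '' {l | parent l = u}) := by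
    ext (_ | _ | _ | _) <;> simp [towerGraph, towerRel]
  rw [this, Set.ncard_insert_of_notMem (by simp), Set.ncard_image_of_injective _
    (Sum.inr_injective.comp (Sum.inr_injective.comp Sum.inl_injective))]

theorem towerGraph_ncard_neighborSet_line [Finite P] (l : L) :
    ((towerGraph parent Inc).neighborSet (.inr (.inr (.inl l)))).ncard =
      {p | Inc l p}.ncard + 1 := by
  have : (towerGraph parent Inc).neighborSet (.inr (.inr (.inl l))) =
      insert (.inr (.inl (parent l))) ((Sum.inr ∘ Sum.inr ∘ Sum.inr) '' {p | Inc l p}) := by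
    ext (_ | _ | _ | _) <;> simp [towerGraph, towerRel, eq_comm]
  rw [this, Set.ncard_insert_of_notMem (by simp), Set.ncard_image_of_injective _
    (Sum.inr_injective.comp (Sum.inr_injective.comp Sum.inr_injective))]

theorem towerGraph_ncard_neighborSet_point (p : P) :
    ((towerGraph parent Inc).neighborSet (.inr (.inr (.inr p)))).ncard =
      {l | Inc l p}.ncard := by
  have : (towerGraph parent Inc).neighborSet (.inr (.inr (.inr p))) =
      (Sum.inr ∘ Sum.inr ∘ Sum.inl) '' {l | Inc l p} := by
    ext (_ | _ | _ | _) <;> simp [towerGraph, towerRel]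
  rw [this, Set.ncard_image_of_injective _
    (Sum.inr_injective.comp (Sum.inr_injective.comp Sum.inl_injective))]

theorem towerGraph_connected (hP : ∀ p, ∃ l, Inc l p) : (towerGraph parent Inc).Connected := by
  have reach_block (u : U) : (towerGraph parent Inc).Reachable (.inl ()) (.inr (.inl u)) :=
    Adj.reachable (by simp [towerGraph, towerRel])
  have reach_line (l : L) : (towerGraph parent Inc).Reachable (.inl ()) (.inr (.inr (.inl l))) :=
    (reach_block (parent l)).trans (Adj.reachable (by simp [towerGraph, towerRel]))
  refine (connected_iff_exists_forall_reachable _).2 ⟨.inl (), ?_⟩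
  rintro (⟨⟩ | u | l | p)
  · rfl
  · exact reach_block u
  · exact reach_line l
  · obtain ⟨l, hl⟩ := hP p
    exact (reach_line l).trans (Adj.reachable (by simpa [towerGraph, towerRel]))

theorem towerGraph_colorable_two : (towerGraph parent Inc).Colorable 2 := by
  let layerParity : Unit ⊕ U ⊕ L ⊕ P → Bool :=
    Sum.elim (fun _ => false) (Sum.elim (fun _ => true) (Sum.elim (fun _ => false) fun _ => true))
  refine (Coloring.mk layerParity ?_).colorable
  rintro (_ | _ | _ | _) (_ | _ | _ | _) h <;> simp_all [towerGraph, towerRel, layerParity]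

theorem towerGraph_commonNeighbors_subsingleton (hB : HasDisjointBlocks parent Inc)
    (hL : IsPartialLinear Inc) {x y : Unit ⊕ U ⊕ L ⊕ P} (hxy : x ≠ y) :
    ((towerGraph parent Inc).commonNeighbors x y).Subsingleton := by
  -- Once the layering and the uniqueness of parents are used, what remains is two lines of one
  -- block through a point, or two lines through two points.
  rintro z ⟨hxz, hyz⟩ w ⟨hxw, hyw⟩
  rcases x with _ | _ | _ | _ <;> rcases z with _ | _ | _ | _ <;>
    simp [towerGraph, towerRel] at hxz <;>
  rcases y with _ | _ | _ | _ <;> simp [towerGraph, towerRel] at hyz hxy <;>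
  rcases w with _ | _ | _ | _ <;> simp [towerGraph, towerRel] at hxw hyw ⊢ <;>
  grind [HasDisjointBlocks, IsPartialLinear]

end TowerGraph

section SigmaIncidence

variable {ι : Type*} {L P : ι → Type*} (Inc : ∀ i, L i → P i → Prop)

inductive SigmaInc : (Σ i, L i) → (Σ i, P i) → Prop
  | mk {i : ι} {l : L i} {p : P i} : Inc i l p → SigmaInc ⟨i, l⟩ ⟨i, p⟩

theorem ncard_setOf_sigmaInc_left (i : ι) (l : L i) :
    {y | SigmaInc Inc ⟨i, l⟩ y}.ncard = {p | Inc i l p}.ncard := by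
  have : {y | SigmaInc Inc ⟨i, l⟩ y} = Sigma.mk i '' {p | Inc i l p} := by
    ext y
    constructor
    · rintro ⟨h⟩
      exact ⟨_, h, rfl⟩
    · rintro ⟨p, h, rfl⟩
      exact .mk h
  rw [this, Set.ncard_image_of_injective _ sigma_mk_injective]

theorem ncard_setOf_sigmaInc_right (i : ι) (p : P i) :
    {x | SigmaInc Inc x ⟨i, p⟩}.ncard = {l | Inc i l p}.ncard := by
  have : {x | SigmaInc Inc x ⟨i, p⟩} = Sigma.mk i '' {l | Inc i l p} := by
    ext x
    constructor
    · rintro ⟨h⟩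
      exact ⟨_, h, rfl⟩
    · rintro ⟨l, h, rfl⟩
      exact .mk h
  rw [this, Set.ncard_image_of_injective _ sigma_mk_injective]

theorem HasDisjointBlocks.sigma {U : ι → Type*} {parent : ∀ i, L i → U i}
    (h : ∀ i, HasDisjointBlocks (parent i) (Inc i)) :
    HasDisjointBlocks (Sigma.map id parent) (SigmaInc Inc) := by
  rintro _ _ _ hpar ⟨hl⟩ ⟨hl'⟩
  simp only [Sigma.map, id, Sigma.mk.injEq, heq_eq_eq, true_and] at hpar
  rw [h _ hpar hl hl']

theorem IsPartialLinear.sigma (h : ∀ i, IsPartialLinear (Inc i)) :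
    IsPartialLinear (SigmaInc Inc) := by
  rintro _ _ _ _ hpp' ⟨hlp⟩ ⟨hlp'⟩ ⟨hl'p⟩ hl'p'
  rcases hl'p' with ⟨hl'p'⟩
  rw [h _ (fun e => hpp' (congrArg _ e)) hlp hlp' hl'p hl'p']

end SigmaIncidence

instance Submodule.Quotient.finite {R M : Type*} [Ring R] [AddCommGroup M] [Module R M]
    [Finite M] (S : Submodule R M) : Finite (M ⧸ S) :=
  Finite.of_surjective _ S.mkQ_surjective

theorem Submodule.ncard_setOf_mkQ_eq {R M : Type*} [Ring R] [AddCommGroup M] [Module R M]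
    (S : Submodule R M) (c : M ⧸ S) : {x | S.mkQ x = c}.ncard = Nat.card S := by
  obtain ⟨v, rfl⟩ := S.mkQ_surjective c
  have : {x | S.mkQ x = S.mkQ v} = Set.range fun s : S => v + (s : M) := by
    ext x
    simp only [Set.mem_ofPred_eq, Set.mem_range, Submodule.mkQ_apply, Submodule.Quotient.eq]
    exact ⟨fun h => ⟨⟨x - v, h⟩, by simp⟩, by rintro ⟨s, rfl⟩; simp⟩
  rw [this]
  exact Set.ncard_range_of_injective ((add_right_injective v).comp Subtype.val_injective)

theorem Submodule.natCard_span_singleton {K V : Type*} [DivisionRing K] [AddCommGroup V]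
    [Module K V] {v : V} (hv : v ≠ 0) : Nat.card (K ∙ v) = Nat.card K :=
  Nat.card_congr (LinearEquiv.toSpanNonzeroSingleton K V v hv).toEquiv.symm

namespace Projectivization

variable {K V : Type*} [DivisionRing K] [AddCommGroup V] [Module K V]

theorem natCard_submodule (D : ℙ K V) : Nat.card D.submodule = Nat.card K := by
  rw [D.submodule_eq, Submodule.natCard_span_singleton D.rep_nonzero]

theorem eq_mk_of_mem_submodule {D : ℙ K V} {v : V} (hv : v ≠ 0) (h : v ∈ D.submodule) :
    D = mk K v hv := by
  conv_lhs => rw [← D.mk_rep]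
  rw [eq_comm, mk_eq_mk_iff']
  rwa [D.submodule_eq, Submodule.mem_span_singleton] at h

theorem natCard_add_one_le [Finite K] (hV : 2 ≤ finrank K V) :
    Nat.card K + 1 ≤ Nat.card (ℙ K V) := by
  rw [card_of_finrank K V rfl]
  calc Nat.card K + 1 = ∑ j ∈ range 2, Nat.card K ^ j := by simp
    _ ≤ _ := sum_le_sum_of_subset (range_subset_range.2 hV)

end Projectivization

section AffLine

variable (F V : Type*) [Field F] [AddCommGroup V] [Module F V]

/-- The line with direction `D` through `p` is `⟨D, p mod D⟩`. -/
abbrev AffLine := Σ D : ℙ F V, V ⧸ D.submodule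

/-- A nonzero vector of `V ⧸ D` whenever `dim V ≥ 2`: the lines with direction `D` whose cosets
differ by one of its multiples form a block. -/
noncomputable def blockDir (D : ℙ F V) : V ⧸ D.submodule := Classical.epsilon (· ≠ 0)

abbrev LineBlock := Σ D : ℙ F V, (V ⧸ D.submodule) ⧸ (F ∙ blockDir F V D)

variable {F V}

theorem blockDir_ne_zero (hV : 2 ≤ finrank F V) (D : ℙ F V) : blockDir F V D ≠ 0 := by
  have : Nontrivial (V ⧸ D.submodule) := by
    rw [Submodule.Quotient.nontrivial_iff]
    intro h
    have := D.finrank_submodule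
    rw [h, finrank_top] at this
    omega
  exact Classical.epsilon_spec (exists_ne (0 : V ⧸ D.submodule))

namespace AffLine

def block : AffLine F V → LineBlock F V := Sigma.map id fun _ => Submodule.mkQ _

def Contains (l : AffLine F V) (p : V) : Prop := l.1.submodule.mkQ p = l.2

theorem exists_contains [Nontrivial V] (p : V) : ∃ l : AffLine F V, l.Contains p :=
  ⟨⟨Classical.arbitrary _, Submodule.mkQ _ p⟩, rfl⟩

theorem ncard_setOf_contains (l : AffLine F V) : {p | l.Contains p}.ncard = Nat.card F := by
  rw [show {p | l.Contains p} = {p | l.1.submodule.mkQ p = l.2} from rfl,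
    Submodule.ncard_setOf_mkQ_eq, Projectivization.natCard_submodule]

theorem ncard_setOf_contains_point (p : V) :
    {l : AffLine F V | l.Contains p}.ncard = Nat.card (ℙ F V) := by
  have : {l : AffLine F V | l.Contains p} = Set.range fun D => ⟨D, D.submodule.mkQ p⟩ := by
    ext ⟨D, c⟩
    simp [Contains, eq_comm]
  rw [this, Set.ncard_range_of_injective fun D D' h => congrArg Sigma.fst h]

theorem ncard_setOf_block_eq (hV : 2 ≤ finrank F V) (b : LineBlock F V) :
    {l : AffLine F V | l.block = b}.ncard = Nat.card F := by
  rw [block, Sigma.ncard_setOf_map_id_eq, Submodule.ncard_setOf_mkQ_eq]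
  exact Submodule.natCard_span_singleton (blockDir_ne_zero hV b.1)

theorem hasDisjointBlocks : HasDisjointBlocks (block (F := F) (V := V)) Contains := by
  rintro ⟨D, c⟩ ⟨D', c'⟩ p h hl hl'
  obtain rfl : D = D' := congrArg Sigma.fst h
  exact congrArg _ (hl.symm.trans hl')

/-- Two points `p ≠ p'` on a line force its direction to be `[p - p']`. -/
theorem isPartialLinear : IsPartialLinear (Contains (F := F) (V := V)) := by
  rintro ⟨D, c⟩ ⟨D', c'⟩ p p' hp hl hl' hl'' hl'''
  simp only [Contains] at *
  have hD := Projectivization.eq_mk_of_mem_submodule (sub_ne_zero.2 hp)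
    ((Submodule.Quotient.eq _).1 (hl.trans hl'.symm))
  have hD' := Projectivization.eq_mk_of_mem_submodule (sub_ne_zero.2 hp)
    ((Submodule.Quotient.eq _).1 (hl''.trans hl'''.symm))
  subst hD hD'
  rw [← hl, ← hl'']

end AffLine

theorem natCard_affLine [Finite V] (hV : 2 ≤ finrank F V) :
    Nat.card (AffLine F V) = Nat.card F * Nat.card (LineBlock F V) := by
  have := Fintype.ofFinite (ℙ F V)
  rw [Nat.card_sigma, Nat.card_sigma, mul_sum]
  refine sum_congr rfl fun D _ => ?_
  rw [Submodule.card_eq_card_quotient_mul_card (F ∙ blockDir F V D),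
    Submodule.natCard_span_singleton (blockDir_ne_zero hV D), mul_comm]

theorem natCard_lineBlock [Finite V] {n : ℕ} (hV : finrank F V = n + 2) :
    Nat.card (LineBlock F V) = Nat.card (ℙ F V) * Nat.card F ^ n := by
  have := Fintype.ofFinite (ℙ F V)
  have hD (D : ℙ F V) :
      Nat.card ((V ⧸ D.submodule) ⧸ (F ∙ blockDir F V D)) = Nat.card F ^ n := by
    have h1 := D.submodule.finrank_quotient_add_finrank
    have h2 := (F ∙ blockDir F V D).finrank_quotient_add_finrank
    rw [D.finrank_submodule, hV] at h1
    rw [finrank_span_singleton (blockDir_ne_zero (by omega) D)] at h2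
    rw [Module.natCard_eq_pow_finrank (K := F)]
    congr 1
    omega
  simp [Nat.card_sigma, hD, Nat.card_eq_fintype_card]

end AffLine

section AffineTower

variable (F : Type*) [Field F] {ι : Type*} (V : ι → Type*) [∀ i, AddCommGroup (V i)]
  [∀ i, Module F (V i)]

def affineTowerGraph :
    SimpleGraph (Unit ⊕ (Σ i, LineBlock F (V i)) ⊕ (Σ i, AffLine F (V i)) ⊕ Σ i, V i) :=
  towerGraph (Sigma.map id fun _ => AffLine.block) (SigmaInc fun _ => AffLine.Contains)

variable {F V}

theorem affineTowerGraph_connected [∀ i, Nontrivial (V i)] : (affineTowerGraph F V).Connected :=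
  towerGraph_connected _ _ fun ⟨i, p⟩ =>
    let ⟨l, hl⟩ := AffLine.exists_contains (F := F) p
    ⟨⟨i, l⟩, .mk hl⟩

theorem affineTowerGraph_colorable_two : (affineTowerGraph F V).Colorable 2 :=
  towerGraph_colorable_two _ _

theorem affineTowerGraph_cycleFree_four : CycleFree (affineTowerGraph F V) 4 :=
  cycleFree_four_of_commonNeighbors_subsingleton fun _ _ =>
    towerGraph_commonNeighbors_subsingleton _ _
      (HasDisjointBlocks.sigma _ fun _ => AffLine.hasDisjointBlocks)
      (IsPartialLinear.sigma _ fun _ => AffLine.isPartialLinear)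

theorem affineTowerGraph_ncard_neighborSet_point (p : Σ i, V i) :
    ((affineTowerGraph F V).neighborSet (.inr (.inr (.inr p)))).ncard =
      Nat.card (ℙ F (V p.1)) := by
  rw [affineTowerGraph, towerGraph_ncard_neighborSet_point, ncard_setOf_sigmaInc_right,
    AffLine.ncard_setOf_contains_point]

variable [Finite ι] [∀ i, Finite (V i)]

theorem affineTowerGraph_ncard_neighborSet_block (hV : ∀ i, 2 ≤ finrank F (V i))
    (b : Σ i, LineBlock F (V i)) :
    ((affineTowerGraph F V).neighborSet (.inr (.inl b))).ncard = Nat.card F + 1 := by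
  rw [affineTowerGraph, towerGraph_ncard_neighborSet_block, Sigma.ncard_setOf_map_id_eq,
    AffLine.ncard_setOf_block_eq (hV b.1)]

theorem affineTowerGraph_ncard_neighborSet_line (l : Σ i, AffLine F (V i)) :
    ((affineTowerGraph F V).neighborSet (.inr (.inr (.inl l)))).ncard = Nat.card F + 1 := by
  rw [affineTowerGraph, towerGraph_ncard_neighborSet_line, ncard_setOf_sigmaInc_left,
    AffLine.ncard_setOf_contains]

theorem natCard_projectivization_le_sigma_lineBlock [Finite F] (hV : ∀ i, 2 ≤ finrank F (V i))
    (i : ι) :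
    Nat.card (ℙ F (V i)) ≤ Nat.card (Σ i, LineBlock F (V i)) := by
  calc Nat.card (ℙ F (V i)) ≤ Nat.card (ℙ F (V i)) * Nat.card F ^ (finrank F (V i) - 2) :=
        Nat.le_mul_of_pos_right _ (pow_pos Nat.card_pos _)
    _ = Nat.card (LineBlock F (V i)) := (natCard_lineBlock (by have := hV i; omega)).symm
    _ ≤ _ := Nat.card_le_card_of_injective (Sigma.mk (β := fun i => LineBlock F (V i)) i)
      sigma_mk_injective

theorem affineTowerGraph_ncard_neighborSet_mem_Icc [Finite F] [Nonempty ι]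
    (hV : ∀ i, 2 ≤ finrank F (V i))
    (v : Unit ⊕ (Σ i, LineBlock F (V i)) ⊕ (Σ i, AffLine F (V i)) ⊕ Σ i, V i) :
    ((affineTowerGraph F V).neighborSet v).ncard ∈
      Set.Icc (Nat.card F + 1) (Nat.card (Σ i, LineBlock F (V i))) := by
  have hP (i : ι) : Nat.card F + 1 ≤ Nat.card (ℙ F (V i)) :=
    Projectivization.natCard_add_one_le (hV i)
  have hU := (hP (Classical.arbitrary ι)).trans
    (natCard_projectivization_le_sigma_lineBlock hV (Classical.arbitrary ι))
  rcases v with ⟨⟩ | b | l | ⟨i, p⟩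
  · rw [affineTowerGraph, towerGraph_ncard_neighborSet_root]
    exact ⟨hU, le_rfl⟩
  · rw [affineTowerGraph_ncard_neighborSet_block hV]
    exact ⟨le_rfl, hU⟩
  · rw [affineTowerGraph_ncard_neighborSet_line]
    exact ⟨le_rfl, hU⟩
  · rw [affineTowerGraph_ncard_neighborSet_point]
    exact ⟨hP i, natCard_projectivization_le_sigma_lineBlock hV i⟩

theorem affineTowerGraph_exists_ncard_neighborSet_eq [Nonempty ι]
    (hV : ∀ i, 2 ≤ finrank F (V i)) :
    ∃ v, ((affineTowerGraph F V).neighborSet v).ncard = Nat.card F + 1 := by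
  let i := Classical.arbitrary ι
  have : Nontrivial (V i) := Module.nontrivial_of_finrank_pos (R := F) (by have := hV i; omega)
  obtain ⟨l, -⟩ := AffLine.exists_contains (F := F) (0 : V i)
  exact ⟨_, affineTowerGraph_ncard_neighborSet_line ⟨i, l⟩⟩

theorem natCard_affineTowerGraph_vertices (hV : ∀ i, 2 ≤ finrank F (V i)) :
    Nat.card (Unit ⊕ (Σ i, LineBlock F (V i)) ⊕ (Σ i, AffLine F (V i)) ⊕ Σ i, V i) =
      1 + (Nat.card F + 1) * Nat.card (Σ i, LineBlock F (V i)) + Nat.card (Σ i, V i) := by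
  have := Fintype.ofFinite ι
  have : Nat.card (Σ i, AffLine F (V i)) = Nat.card F * Nat.card (Σ i, LineBlock F (V i)) := by
    rw [Nat.card_sigma, Nat.card_sigma, mul_sum]
    exact sum_congr rfl fun i _ => natCard_affLine (hV i)
  simp only [Nat.card_sum, Nat.card_unique, this]
  ring

end AffineTower

theorem natCard_sigma_lineBlock_fin (F : Type*) [Field F] [Finite F] (m : ℕ) :
    Nat.card (Σ i : Fin m, LineBlock F (Fin (i + 2) → F)) =
      ∑ i ∈ range m, (∑ j ∈ range (i + 2), Nat.card F ^ j) * Nat.card F ^ i := by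
  rw [Nat.card_sigma, ← Fin.sum_univ_eq_sum_range
    fun i => (∑ j ∈ range (i + 2), Nat.card F ^ j) * Nat.card F ^ i]
  refine sum_congr rfl fun i _ => ?_
  rw [natCard_lineBlock (finrank_fin_fun F),
    Projectivization.card_of_finrank F _ (finrank_fin_fun F)]

theorem natCard_sigma_fin_fun (F : Type*) [Finite F] (m : ℕ) :
    Nat.card (Σ i : Fin m, Fin (i + 2) → F) = ∑ i ∈ range m, Nat.card F ^ (i + 2) := by
  rw [Nat.card_sigma, ← Fin.sum_univ_eq_sum_range fun i => Nat.card F ^ (i + 2)]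
  simp [Nat.card_fun]

theorem sum_geom_sum_mul_pow_mul {R : Type*} [CommRing R] (x : R) (m : ℕ) :
    (∑ i ∈ range m, (∑ j ∈ range (i + 2), x ^ j) * x ^ i) * (x - 1) * (x ^ 2 - 1) =
      (x ^ m - 1) * (x ^ 2 * (x ^ m + 1) - (x + 1)) := by
  induction m with
  | zero => simp
  | succ m ih =>
    rw [sum_range_succ, add_mul, add_mul, ih, mul_right_comm _ (x ^ m), geom_sum_mul]
    ring

theorem sum_pow_add_two_mul {R : Type*} [CommRing R] (x : R) (m : ℕ) :
    (∑ i ∈ range m, x ^ (i + 2)) * (x - 1) = x ^ 2 * (x ^ m - 1) := by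
  have : ∑ i ∈ range m, x ^ (i + 2) = (∑ i ∈ range m, x ^ i) * x ^ 2 := by
    simp_rw [sum_mul, pow_add]
  rw [this, mul_right_comm, geom_sum_mul, mul_comm]

theorem eq_div_sub_one_div_of_mul_eq {Q B : ℝ} (m : ℕ) (hQ : 2 ≤ Q)
    (hB : B * (Q - 1) * (Q ^ 2 - 1) = (Q ^ m - 1) * (Q ^ 2 * (Q ^ m + 1) - (Q + 1))) :
    B = (Q ^ (m + 2) - 1) * (Q ^ (m + 1) - 1) / ((Q ^ 2 - 1) * (Q ^ 2 - Q)) - 1 / Q := by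
  have h1 : Q - 1 ≠ 0 := by linarith
  have h2 : Q ^ 2 - 1 ≠ 0 := by nlinarith
  have h3 : Q ^ 2 - Q ≠ 0 := by nlinarith
  have h0 : Q ≠ 0 := by linarith
  rw [eq_sub_iff_add_eq, eq_div_iff (mul_ne_zero h2 h3)]
  field_simp
  linear_combination Q * hB

-- `B`, `S` and `A` stand for `Δ`, the number of points and `q^(k-2)`. Multiplied by
-- `(Q - 1)² (Q + 1)`, each squared bound becomes a visibly nonnegative polynomial in `Q` and `A`.
theorem mul_sqrt_add_half_le {Q A B S : ℝ} (hQ : 2 ≤ Q) (hA : Q ≤ A)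
    (hB : B * (Q - 1) * (Q ^ 2 - 1) = (A - 1) * (Q ^ 2 * (A + 1) - (Q + 1)))
    (hS : S * (Q - 1) = Q ^ 2 * (A - 1)) :
    Q * √(B * (Q - 1)) + 1 / 2 ≤ S := by
  have key : ((S - 1 / 2) ^ 2 - Q ^ 2 * (B * (Q - 1))) * ((Q - 1) ^ 2 * (Q + 1)) =
      2 * Q ^ 4 * (A - 1) * (A - Q) + (Q + 1) * (Q - 1) ^ 2 / 4 := by
    linear_combination
      (Q + 1) * (S * (Q - 1) + Q ^ 2 * (A - 1) - (Q - 1)) * hS - Q ^ 2 * (Q - 1) * hB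
  have hS4 : 4 ≤ S := by nlinarith
  have hsq : Q ^ 2 * (B * (Q - 1)) ≤ (S - 1 / 2) ^ 2 := by
    have : 0 ≤ ((S - 1 / 2) ^ 2 - Q ^ 2 * (B * (Q - 1))) * ((Q - 1) ^ 2 * (Q + 1)) := by
      have : 0 ≤ A - 1 := by linarith
      have : 0 ≤ A - Q := by linarith
      rw [key]
      positivity
    linarith [nonneg_of_mul_nonneg_left this (mul_pos (pow_pos (by linarith) 2) (by linarith))]
  have hQsqrt : Q * √(B * (Q - 1)) = √(Q ^ 2 * (B * (Q - 1))) := by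
    rw [Real.sqrt_mul (sq_nonneg Q), Real.sqrt_sq (by linarith)]
  linarith [Real.sqrt_le_iff.2 ⟨by linarith, hsq⟩]

theorem le_mul_sqrt_add_one {Q A B S : ℝ} (hQ : 2 ≤ Q) (hA : Q ≤ A)
    (hB : B * (Q - 1) * (Q ^ 2 - 1) = (A - 1) * (Q ^ 2 * (A + 1) - (Q + 1)))
    (hS : S * (Q - 1) = Q ^ 2 * (A - 1)) :
    S ≤ (Q + 2) * √(B * (Q - 1)) + 1 := by
  have key : ((Q + 2) ^ 2 * (B * (Q - 1)) - (S - 1) ^ 2) * ((Q - 1) ^ 2 * (Q + 1)) =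
      2 * Q ^ 2 * (Q ^ 2 - 2) * (A - 1) ^ 2
        + ((Q + 2) ^ 2 * (Q - 1) ^ 2 * (2 * Q + 1) + 2 * (Q + 1) * (Q - 1) * Q ^ 2) * (A - 2)
        + (Q - 1) ^ 2 * ((Q + 2) ^ 2 * (2 * Q + 1) - (Q + 1)) + 2 * (Q + 1) * (Q - 1) * Q ^ 2 := by
    linear_combination (Q + 2) ^ 2 * (Q - 1) * hB
      - (Q + 1) * (S * (Q - 1) + Q ^ 2 * (A - 1) - 2 * (Q - 1)) * hS
  have hsq : (S - 1) ^ 2 ≤ (Q + 2) ^ 2 * (B * (Q - 1)) := by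
    have : 0 ≤ ((Q + 2) ^ 2 * (B * (Q - 1)) - (S - 1) ^ 2) * ((Q - 1) ^ 2 * (Q + 1)) := by
      have : 0 ≤ Q ^ 2 - 2 := by nlinarith
      have : 0 ≤ A - 2 := by linarith
      have : 0 ≤ Q - 1 := by linarith
      have : 0 ≤ (Q + 2) ^ 2 * (2 * Q + 1) - (Q + 1) := by nlinarith
      rw [key]
      positivity
    linarith [nonneg_of_mul_nonneg_left this (mul_pos (pow_pos (by linarith) 2) (by linarith))]
  have hsqrt : (Q + 2) * √(B * (Q - 1)) = √((Q + 2) ^ 2 * (B * (Q - 1))) := by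
    rw [Real.sqrt_mul (sq_nonneg _), Real.sqrt_sq (by linarith)]
  linarith [le_abs_self (S - 1), Real.abs_le_sqrt hsq]

theorem stmt_11 (δ k q : ℕ) (hq : IsPrimePow q) (hδq : δ - 1 = q) (hk : 7 ≤ k) :
    ∃ (V : Type) (G : SimpleGraph V) (Δ : ℕ), Finite V ∧ G.Connected ∧ G.Colorable 2 ∧
      CycleFree G 4 ∧
      (∀ v : V, δ ≤ (G.neighborSet v).ncard) ∧ (∃ v : V, (G.neighborSet v).ncard = δ) ∧
      (∀ v : V, (G.neighborSet v).ncard ≤ Δ) ∧ (∃ v : V, (G.neighborSet v).ncard = Δ) ∧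
      (Δ : ℝ) = ((q : ℝ) ^ k - 1) * ((q : ℝ) ^ (k - 1) - 1) /
          (((q : ℝ) ^ 2 - 1) * ((q : ℝ) ^ 2 - q)) - 1 / q ∧
      (Δ : ℝ) * δ + ((δ : ℝ) - 1) * Real.sqrt ((Δ : ℝ) * ((δ : ℝ) - 2)) + 3 / 2 ≤
        (Nat.card V : ℝ) ∧
      (Nat.card V : ℝ) ≤
        (Δ : ℝ) * δ + ((δ : ℝ) - 1) * Real.sqrt ((Δ : ℝ) * ((δ : ℝ) - 2)) + 3 / 2
          + 2 * Real.sqrt ((Δ : ℝ) * ((δ : ℝ) - 2)) + 1 / 2 := by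
  have hq2 := hq.two_le
  obtain rfl : δ = q + 1 := by omega
  obtain ⟨p, n, hp, hn, hpn⟩ := hq
  have := Fact.mk hp.nat_prime
  obtain ⟨m, rfl⟩ : ∃ m, k = m + 2 := ⟨k - 2, by omega⟩
  have hF : Nat.card (GaloisField p n) = q := hpn ▸ GaloisField.card p n hn.ne'
  let V (i : Fin m) := Fin (i + 2) → GaloisField p n
  have hV (i : Fin m) : 2 ≤ finrank (GaloisField p n) (V i) := by simp [V]
  have : Nonempty (Fin m) := ⟨⟨0, by omega⟩⟩
  have hdeg := affineTowerGraph_ncard_neighborSet_mem_Icc hV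
  obtain ⟨v₀, hv₀⟩ := affineTowerGraph_exists_ncard_neighborSet_eq hV
  rw [hF] at hdeg hv₀
  have hQ : (2 : ℝ) ≤ q := by exact_mod_cast hq2
  have hB : (Nat.card (Σ i, LineBlock (GaloisField p n) (V i)) : ℝ) * (q - 1) * (q ^ 2 - 1) =
      ((q : ℝ) ^ m - 1) * (q ^ 2 * (q ^ m + 1) - (q + 1)) := by
    rw [natCard_sigma_lineBlock_fin, hF]; push_cast; exact sum_geom_sum_mul_pow_mul _ _
  have hS : (Nat.card (Σ i, V i) : ℝ) * (q - 1) = q ^ 2 * (q ^ m - 1) := by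
    rw [natCard_sigma_fin_fun, hF]; push_cast; exact sum_pow_add_two_mul _ _
  have hA : (q : ℝ) ≤ q ^ m := le_self_pow₀ (by linarith) (by omega)
  refine ⟨_, affineTowerGraph _ V, _, inferInstance, affineTowerGraph_connected,
    affineTowerGraph_colorable_two, affineTowerGraph_cycleFree_four, fun v => (hdeg v).1,
    ⟨v₀, hv₀⟩, fun v => (hdeg v).2, ⟨.inl (), towerGraph_ncard_neighborSet_root _ _⟩,
    eq_div_sub_one_div_of_mul_eq m hQ hB, ?_⟩
  rw [natCard_affineTowerGraph_vertices hV, hF]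
  push_cast
  rw [show (q : ℝ) + 1 - 2 = q - 1 by ring]
  exact ⟨by linarith [mul_sqrt_add_half_le hQ hA hB hS],
    by linarith [le_mul_sqrt_add_one hQ hA hB hS]⟩
end

section
/- Let q be a prime power and let H_q be the bipartite graph whose partite sets are the 1-dimensional and the 2-dimensional subspaces of the 3-dimensional vector space GF(q)³ over the finite field GF(q), where a 1-dimensional subspace v₁ is adjacent to a 2-dimensional subspace v₂ if and only if v₁ ⊆ v₂. Then H_q has exactly 2(q² + q + 1) vertices, is (q+1)-regular, has diameter 3, and contains no 4-cycle as a subgraph. -/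
open SimpleGraph

/-- The bipartite incidence graph between the 1-dimensional and 2-dimensional subspaces of
the 3-dimensional vector space `Fin 3 → F` over `F`, where a 1-dimensional subspace is
adjacent to a 2-dimensional subspace iff it is contained in it. -/
def Hq (F : Type*) [Field F] :
    SimpleGraph {W : Submodule F (Fin 3 → F) //
      Module.finrank F W = 1 ∨ Module.finrank F W = 2} where
  Adj a b := a.1 < b.1 ∨ b.1 < a.1
  symm := ⟨fun a b h => h.symm⟩
  loopless := ⟨fun a h => h.elim (lt_irrefl a.1) (lt_irrefl a.1)⟩

/-! Lines and planes of `F³` are the points and lines of the projective plane over `F`. There are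
`q² + q + 1` lines, and annihilator duality in `(F³)*` exchanges lines and planes, so there are as
many planes; a plane contains `q + 1` lines and, dually, a line lies in `q + 1` planes. Two distinct
lines span exactly one plane and two distinct planes meet in exactly one line, so two distinct
vertices of the same kind have exactly one common neighbour. This gives both diameter at most 3
and the absence of 4-cycles. The graph is bipartite by dimension, so a line not contained in a
plane lies at odd distance other than 1 from it, hence at distance 3. -/

open Module Submodule

theorem cycleFree_four_of_eq_of_common_neighbors {V : Type*} {G : SimpleGraph V}
    (h : ∀ ⦃a b c d⦄, a ≠ c → G.Adj a b → G.Adj b c → G.Adj c d → G.Adj d a → b = d) :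
    CycleFree G 4 := by
  intro a w hw hlen
  match w, hw, hlen with
  | .cons hab (.cons hbc (.cons hcd (.cons hda .nil))), hw, _ =>
    have hnd := hw.support_nodup
    simp only [Walk.support_cons, Walk.support_nil, List.tail_cons, List.nodup_cons,
      List.mem_cons, List.not_mem_nil, or_false, not_or] at hnd
    exact hnd.1.2.1 (h (Ne.symm hnd.2.1.2) hab hbc hcd hda)

section Counting

variable {F V : Type*} [Field F] [AddCommGroup V] [Module F V]

theorem card_finrank_eq_one_and_le [Finite F] (A : Submodule F V) :
    Nat.card {W : Submodule F V // finrank F W = 1 ∧ W ≤ A} =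
      ∑ i ∈ Finset.range (finrank F A), Nat.card F ^ i := by
  rw [← Projectivization.card_of_finrank F A rfl,
    Nat.card_congr (Projectivization.equivSubmodule F A)]
  refine Nat.card_congr (Equiv.symm ?_)
  refine ((MapSubtype.orderIso A).toEquiv.subtypeEquiv fun U => ?_).trans
    ((Equiv.subtypeSubtypeEquivSubtypeInter _ _).trans (Equiv.subtypeEquivRight fun _ => and_comm))
  change _ ↔ finrank F (U.map A.subtype) = 1
  rw [finrank_map_subtype_eq]

theorem card_finrank_eq_one [Finite F] :
    Nat.card {W : Submodule F V // finrank F W = 1} =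
      ∑ i ∈ Finset.range (finrank F V), Nat.card F ^ i := by
  rw [← finrank_top F V, ← card_finrank_eq_one_and_le]
  exact Nat.card_congr (Equiv.subtypeEquivRight fun W => (and_iff_left le_top).symm)

theorem exists_finrank_eq_one_le {A : Submodule F V} (hA : finrank F A ≠ 0) :
    ∃ W : Submodule F V, finrank F W = 1 ∧ W ≤ A := by
  obtain ⟨x, hxA, hx⟩ := A.ne_bot_iff.1 fun h => hA (h ▸ finrank_bot F V)
  exact ⟨span F {x}, finrank_span_singleton hx, span_singleton_le_iff_mem x A |>.2 hxA⟩

theorem card_finrank_eq_and_le_eq_card_dual [FiniteDimensional F V] {k : ℕ}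
    (hk : k ≤ finrank F V) (L : Submodule F V) :
    Nat.card {W : Submodule F V // finrank F W = k ∧ L ≤ W} =
      Nat.card {Φ : Submodule F (Dual F V) //
        finrank F Φ = finrank F V - k ∧ Φ ≤ L.dualAnnihilator} := by
  refine Nat.card_congr
    ((Subspace.orderIsoFiniteDimensional (K := F) (V := V)).toEquiv.subtypeEquiv fun W => ?_)
  have := Subspace.finrank_add_finrank_dualAnnihilator_eq W
  change _ ↔ finrank F W.dualAnnihilator = _ ∧ W.dualAnnihilator ≤ L.dualAnnihilator
  rw [Subspace.dualAnnihilator_le_dualAnnihilator_iff]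
  exact and_congr_left fun _ => by have := W.finrank_le; omega

end Counting

section Incidence

variable {F V : Type*} [Field F] [AddCommGroup V] [Module F V] [FiniteDimensional F V]

theorem finrank_sup_eq_two_of_finrank_eq_one {u w : Submodule F V} (hu : finrank F u = 1)
    (hw : finrank F w = 1) (hne : u ≠ w) : finrank F ↥(u ⊔ w) = 2 := by
  have : finrank F ↥(u ⊓ w) < 1 := hu ▸ finrank_lt_finrank_of_lt (inf_le_left.lt_of_ne
    fun h => hne (eq_of_le_of_finrank_eq (h ▸ inf_le_right) (hu.trans hw.symm)))
  have := finrank_sup_add_finrank_inf_eq u w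
  omega

theorem finrank_inf_eq_one_of_finrank_eq_two (hV : finrank F V = 3) {u w : Submodule F V}
    (hu : finrank F u = 2) (hw : finrank F w = 2) (hne : u ≠ w) : finrank F ↥(u ⊓ w) = 1 := by
  have : 2 < finrank F ↥(u ⊔ w) := hu ▸ finrank_lt_finrank_of_lt (le_sup_left.lt_of_ne
    fun h => hne (eq_of_le_of_finrank_eq (h ▸ le_sup_right) (hw.trans hu.symm)).symm)
  have := finrank_sup_add_finrank_inf_eq u w
  have := (u ⊔ w).finrank_le
  omega

theorem sup_eq_of_finrank_eq_one_of_le {u w P : Submodule F V} (hu : finrank F u = 1)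
    (hw : finrank F w = 1) (hne : u ≠ w) (hP : finrank F P = 2) (huP : u ≤ P) (hwP : w ≤ P) :
    u ⊔ w = P :=
  eq_of_le_of_finrank_eq (sup_le huP hwP)
    ((finrank_sup_eq_two_of_finrank_eq_one hu hw hne).trans hP.symm)

theorem inf_eq_of_finrank_eq_two_of_le (hV : finrank F V = 3) {u w L : Submodule F V}
    (hu : finrank F u = 2) (hw : finrank F w = 2) (hne : u ≠ w) (hL : finrank F L = 1)
    (hLu : L ≤ u) (hLw : L ≤ w) : L = u ⊓ w :=
  eq_of_le_of_finrank_eq (le_inf hLu hLw)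
    (hL.trans (finrank_inf_eq_one_of_finrank_eq_two hV hu hw hne).symm)

theorem exists_finrank_eq_one_finrank_eq_two_not_le (hV : finrank F V = 3) :
    ∃ L P : Submodule F V, finrank F L = 1 ∧ finrank F P = 2 ∧ ¬ L ≤ P := by
  obtain ⟨L, hL, -⟩ := exists_finrank_eq_one_le (A := (⊤ : Submodule F V)) (by simp [hV])
  obtain ⟨P, hLP⟩ := L.exists_isCompl
  have := finrank_add_eq_of_isCompl hLP
  rw [hL, hV] at this
  refine ⟨L, P, hL, by omega, fun h => ?_⟩
  rw [(inf_eq_left.2 h).symm.trans hLP.inf_eq_bot, finrank_bot] at hL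
  exact zero_ne_one hL

end Incidence

namespace Hq

abbrev Vertex (F : Type*) [Field F] :=
  {W : Submodule F (Fin 3 → F) // finrank F W = 1 ∨ finrank F W = 2}

variable {F : Type*} [Field F]

theorem finrank_eq_of_lt {a b : Vertex F} (h : a.1 < b.1) :
    finrank F a.1 = 1 ∧ finrank F b.1 = 2 := by
  have := finrank_lt_finrank_of_lt h
  rcases a.2 with ha | ha <;> rcases b.2 with hb | hb <;> omega

theorem finrank_add_finrank_of_adj {a b : Vertex F} (h : (Hq F).Adj a b) :
    finrank F a.1 + finrank F b.1 = 3 := by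
  rcases h with h | h <;> have := finrank_eq_of_lt h <;> omega

theorem adj_iff_of_finrank_eq_one {a b : Vertex F} (ha : finrank F a.1 = 1) :
    (Hq F).Adj a b ↔ finrank F b.1 = 2 ∧ a.1 ≤ b.1 := by
  refine ⟨fun h => ?_, fun ⟨hb, hab⟩ => .inl (hab.lt_of_ne fun h => by rw [h] at ha; omega)⟩
  rcases h with h | h <;> have := finrank_eq_of_lt h
  · exact ⟨this.2, h.le⟩
  · omega

theorem adj_iff_of_finrank_eq_two {a b : Vertex F} (ha : finrank F a.1 = 2) :
    (Hq F).Adj a b ↔ finrank F b.1 = 1 ∧ b.1 ≤ a.1 := by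
  refine ⟨fun h => ?_, fun ⟨hb, hab⟩ => .inr (hab.lt_of_ne fun h => by rw [← h] at ha; omega)⟩
  rcases h with h | h <;> have := finrank_eq_of_lt h
  · omega
  · exact ⟨this.1, h.le⟩

theorem eq_of_common_neighbors ⦃a b c d : Vertex F⦄ (hac : a ≠ c) (hab : (Hq F).Adj a b)
    (hbc : (Hq F).Adj b c) (hcd : (Hq F).Adj c d) (hda : (Hq F).Adj d a) : b = d := by
  have hac' : a.1 ≠ c.1 := Subtype.coe_injective.ne hac
  have hb := finrank_add_finrank_of_adj hab
  have hc := finrank_add_finrank_of_adj hbc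
  rcases a.2 with ha | ha
  · rw [adj_iff_of_finrank_eq_one ha] at hab
    rw [(Hq F).adj_comm, adj_iff_of_finrank_eq_one ha] at hda
    rw [(Hq F).adj_comm, adj_iff_of_finrank_eq_one (by omega)] at hbc
    rw [adj_iff_of_finrank_eq_one (by omega)] at hcd
    have hc1 : finrank F c.1 = 1 := by omega
    have hb' := sup_eq_of_finrank_eq_one_of_le ha hc1 hac' hab.1 hab.2 hbc.2
    have hd' := sup_eq_of_finrank_eq_one_of_le ha hc1 hac' hda.1 hda.2 hcd.2
    exact Subtype.ext (hb'.symm.trans hd')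
  · rw [adj_iff_of_finrank_eq_two ha] at hab
    rw [(Hq F).adj_comm, adj_iff_of_finrank_eq_two ha] at hda
    rw [(Hq F).adj_comm, adj_iff_of_finrank_eq_two (by omega)] at hbc
    rw [adj_iff_of_finrank_eq_two (by omega)] at hcd
    have hc2 : finrank F c.1 = 2 := by omega
    have hb' := inf_eq_of_finrank_eq_two_of_le (finrank_fin_fun F) ha hc2 hac' hab.1 hab.2 hbc.2
    have hd' := inf_eq_of_finrank_eq_two_of_le (finrank_fin_fun F) ha hc2 hac' hda.1 hda.2 hcd.2
    exact Subtype.ext (hb'.trans hd'.symm)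

theorem exists_adj_adj {a c : Vertex F} (hac : a ≠ c) (h : finrank F a.1 = finrank F c.1) :
    ∃ b, (Hq F).Adj a b ∧ (Hq F).Adj b c := by
  have hac' : a.1 ≠ c.1 := Subtype.coe_injective.ne hac
  rcases a.2 with ha | ha
  · have hb := finrank_sup_eq_two_of_finrank_eq_one ha (h ▸ ha) hac'
    refine ⟨⟨a.1 ⊔ c.1, .inr hb⟩, (adj_iff_of_finrank_eq_one ha).2 ⟨hb, le_sup_left⟩,
      (adj_iff_of_finrank_eq_two hb).2 ⟨h ▸ ha, le_sup_right⟩⟩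
  · obtain ⟨b, hb, hbac⟩ := exists_finrank_eq_one_le
      ((finrank_inf_eq_one_of_finrank_eq_two (finrank_fin_fun F) ha (h ▸ ha) hac').trans_ne one_ne_zero)
    refine ⟨⟨b, .inl hb⟩, (adj_iff_of_finrank_eq_two ha).2 ⟨hb, hbac.trans inf_le_left⟩,
      (adj_iff_of_finrank_eq_one hb).2 ⟨h ▸ ha, hbac.trans inf_le_right⟩⟩

theorem exists_walk_length_le_two {u v : Vertex F} (h : finrank F u.1 = finrank F v.1) :
    ∃ p : (Hq F).Walk u v, p.length ≤ 2 := by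
  rcases eq_or_ne u v with rfl | huv
  · exact ⟨.nil, by simp⟩
  · obtain ⟨b, hub, hbv⟩ := exists_adj_adj huv h
    exact ⟨.cons hub (.cons hbv .nil), by simp⟩

noncomputable def bicoloring : (Hq F).Coloring Bool :=
  Coloring.mk (fun v => decide (finrank F v.1 = 1)) fun h => by
    have := finrank_add_finrank_of_adj h
    simp only [ne_eq, decide_eq_decide]
    omega

theorem ncard_neighborSet_eq {v : Vertex F} {P : Submodule F (Fin 3 → F) → Prop}
    (hP : ∀ {W}, P W → finrank F W = 1 ∨ finrank F W = 2) (h : ∀ b, (Hq F).Adj v b ↔ P b.1) :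
    ((Hq F).neighborSet v).ncard = Nat.card {W // P W} := by
  rw [← Nat.card_coe_set_eq]
  exact Nat.card_congr <| (Equiv.subtypeEquivRight h).trans (Equiv.subtypeSubtypeEquivSubtype hP)

variable [Finite F]

theorem ncard_neighborSet (v : Vertex F) : ((Hq F).neighborSet v).ncard = Nat.card F + 1 := by
  rcases v.2 with hv | hv
  · have hann : finrank F v.1.dualAnnihilator = 2 := by
      have := Subspace.finrank_add_finrank_dualAnnihilator_eq v.1
      rw [hv, finrank_fin_fun] at this
      omega
    rw [ncard_neighborSet_eq (P := fun W => finrank F W = 2 ∧ v.1 ≤ W) (fun h => Or.inr h.1)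
        fun _ => adj_iff_of_finrank_eq_one hv,
      card_finrank_eq_and_le_eq_card_dual (by simp), finrank_fin_fun, card_finrank_eq_one_and_le,
      hann]
    simp [Finset.sum_range_succ, add_comm]
  · rw [ncard_neighborSet_eq (P := fun W => finrank F W = 1 ∧ W ≤ v.1) (fun h => Or.inl h.1)
        fun _ => adj_iff_of_finrank_eq_two hv,
      card_finrank_eq_one_and_le, hv]
    simp [Finset.sum_range_succ, add_comm]

theorem exists_walk_length_le_three (u v : Vertex F) : ∃ p : (Hq F).Walk u v, p.length ≤ 3 := by
  by_cases h : finrank F u.1 = finrank F v.1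
  · obtain ⟨p, hp⟩ := exists_walk_length_le_two h
    exact ⟨p, by omega⟩
  · -- any neighbour `c` of `v` has the dimension of `u`
    obtain ⟨c, hvc⟩ := Set.nonempty_of_ncard_ne_zero
      ((ncard_neighborSet v).trans_ne (Nat.succ_ne_zero _))
    have := finrank_add_finrank_of_adj hvc
    obtain ⟨p, hp⟩ := exists_walk_length_le_two (u := u) (v := c)
      (by rcases u.2 with hu | hu <;> rcases v.2 with hv | hv <;> omega)
    exact ⟨p.concat hvc.symm, by simp; omega⟩

theorem dist_le_three (u v : Vertex F) : (Hq F).dist u v ≤ 3 :=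
  (exists_walk_length_le_three u v).elim fun p hp => (dist_le p).trans hp

theorem exists_dist_eq_three : ∃ u v : Vertex F, (Hq F).dist u v = 3 := by
  obtain ⟨L, P, hL, hP, hLP⟩ := exists_finrank_eq_one_finrank_eq_two_not_le (finrank_fin_fun F)
  refine ⟨⟨L, .inl hL⟩, ⟨P, .inr hP⟩, ?_⟩
  obtain ⟨p, hp⟩ := exists_walk_length_le_three ⟨L, .inl hL⟩ ⟨P, .inr hP⟩
  obtain ⟨q, hq⟩ := (Walk.reachable p).exists_walk_length_eq_dist
  have hodd : Odd q.length := by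
    rw [bicoloring.odd_length_iff_not_congr]
    simp [bicoloring, Coloring.mk, hL, hP]
  have hnadj : (Hq F).dist ⟨L, .inl hL⟩ ⟨P, .inr hP⟩ ≠ 1 := by
    rw [Ne, dist_eq_one_iff_adj, adj_iff_of_finrank_eq_one hL]
    exact fun h => hLP h.2
  have := dist_le p
  rw [hq] at hodd
  rcases hodd with ⟨k, hk⟩
  omega

theorem connected : (Hq F).Connected := by
  obtain ⟨u, -⟩ := exists_dist_eq_three (F := F)
  exact (connected_iff _).2
    ⟨fun u v => (exists_walk_length_le_three u v).elim fun p _ => p.reachable, ⟨u⟩⟩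

theorem card_vertex : Nat.card (Vertex F) = 2 * (Nat.card F ^ 2 + Nat.card F + 1) := by
  classical
  have hlines : Nat.card {W : Submodule F (Fin 3 → F) // finrank F W = 1} =
      Nat.card F ^ 2 + Nat.card F + 1 := by
    rw [card_finrank_eq_one, finrank_fin_fun]
    simp [Finset.sum_range_succ]
    ring
  have hplanes : Nat.card {W : Submodule F (Fin 3 → F) // finrank F W = 2} =
      Nat.card F ^ 2 + Nat.card F + 1 := by
    have := card_finrank_eq_and_le_eq_card_dual (k := 2) (by simp) (⊥ : Submodule F (Fin 3 → F))
    simp only [bot_le, and_true, dualAnnihilator_bot, le_top, finrank_fin_fun] at this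
    rw [this, card_finrank_eq_one, Subspace.dual_finrank_eq, finrank_fin_fun]
    simp [Finset.sum_range_succ]
    ring
  have hdisj : Disjoint (fun W : Submodule F (Fin 3 → F) => finrank F W = 1)
      (fun W => finrank F W = 2) :=
    Pi.disjoint_iff.2 fun W => Prop.disjoint_iff.2 fun ⟨h1, h2⟩ => by omega
  rw [Nat.card_congr (subtypeOrEquiv _ _ hdisj), Nat.card_sum, hlines, hplanes]
  ring

end Hq

theorem stmt_15_general (q : ℕ) (F : Type) [Field F] [Fintype F]
    (hF : Fintype.card F = q) :
    Nat.card {W : Submodule F (Fin 3 → F) //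
        Module.finrank F W = 1 ∨ Module.finrank F W = 2} = 2 * (q ^ 2 + q + 1) ∧
      (∀ v, ((Hq F).neighborSet v).ncard = q + 1) ∧
      (Hq F).Connected ∧
      (∀ u v, (Hq F).dist u v ≤ 3) ∧ (∃ u v, (Hq F).dist u v = 3) ∧
      CycleFree (Hq F) 4 := by
  rw [← hF, ← Nat.card_eq_fintype_card]
  exact ⟨Hq.card_vertex, Hq.ncard_neighborSet, Hq.connected, Hq.dist_le_three,
    Hq.exists_dist_eq_three, cycleFree_four_of_eq_of_common_neighbors Hq.eq_of_common_neighbors⟩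

theorem stmt_15 (q : ℕ) (hq : IsPrimePow q) (F : Type) [Field F] [Fintype F]
    (hF : Fintype.card F = q) :
    Nat.card {W : Submodule F (Fin 3 → F) //
        Module.finrank F W = 1 ∨ Module.finrank F W = 2} = 2 * (q ^ 2 + q + 1) ∧
      (∀ v, ((Hq F).neighborSet v).ncard = q + 1) ∧
      (Hq F).Connected ∧
      (∀ u v, (Hq F).dist u v ≤ 3) ∧ (∃ u v, (Hq F).dist u v = 3) ∧
      CycleFree (Hq F) 4 :=
  stmt_15_general q F hF
end
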